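/- arXiv:1711.07851 — 7 statements merged into one kernel-verified Lean document; each statement's English description precedes it below -/
import Mathlib

section
/- Let C be a box of width w and height h, and let I be a finite set of rectangles such that each rectangle i in I has width w_i ≤ εw and height h_i ≤ εh for some ε ∈ (0,1). Then the Next-Fit-Decreasing-Height algorithm packs into C a subset I'' ⊆ I whose total area satisfies a(I'') ≥ min{a(I), (1−2ε)·w·h}. In particular, if a(I) ≤ (1−2ε)·w·h, then all rectangles of I are packed. -/
/-! Sort the rectangles by non-increasing height and pack them in next-fit shelves. If some
rectangle is left over, every shelf was closed because the next rectangle, of width at most `εW`,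
did not fit, so it is filled to width more than `(1 - ε)W`; as heights decrease, its area is at
least `(1 - ε)W` times the height of the shelf above it (the last shelf is charged to the
rectangle that did not fit). Summing, the packed area is at least `(1 - ε)W (H - h₁)`, where
`h₁ ≤ εH` is the height of the first shelf, and `(1 - ε)² ≥ 1 - 2ε`. When `a(I) ≤ (1 - 2ε)WH`,
the packed subset therefore has the full area, so it is all of `I`. -/

open Finset

/-- `x y` give the bottom-left corners of an axis-aligned, non-overlapping packing of the
rectangles indexed by `s` (with widths `w` and heights `h`) inside a `W × H` box. -/
def IsPacking {ι : Type*} (s : Finset ι) (w h : ι → ℝ) (W H : ℝ) (x y : ι → ℝ) : Prop :=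
  (∀ i ∈ s, 0 ≤ x i ∧ x i + w i ≤ W ∧ 0 ≤ y i ∧ y i + h i ≤ H) ∧
  (∀ i ∈ s, ∀ j ∈ s, i ≠ j →
    x i + w i ≤ x j ∨ x j + w j ≤ x i ∨ y i + h i ≤ y j ∨ y j + h j ≤ y i)

theorem Finset.eq_of_subset_of_sum_le {ι M : Type*} [AddCommMonoid M] [PartialOrder M]
    [IsOrderedCancelAddMonoid M] {s t : Finset ι} {f : ι → M} (hts : t ⊆ s)
    (hf : ∀ i ∈ s, 0 < f i) (hsum : ∑ i ∈ s, f i ≤ ∑ i ∈ t, f i) : t = s := by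
  by_contra hne
  obtain ⟨i, his, hit⟩ := Finset.exists_of_ssubset (hts.ssubset_of_ne hne)
  exact (sum_lt_sum_of_subset hts his hit (hf i his) fun j hj _ => (hf j hj).le).not_ge hsum

theorem List.exists_nodup_toFinset_eq_pairwise {ι α : Type*} [DecidableEq ι] [LinearOrder α]
    (s : Finset ι) (f : ι → α) :
    ∃ l : List ι, l.Nodup ∧ l.toFinset = s ∧ l.Pairwise fun a b => f b ≤ f a := by
  have hperm := s.toList.mergeSort_perm fun a b => decide (f b ≤ f a)
  refine ⟨_, hperm.nodup_iff.2 s.nodup_toList, by ext; simp [hperm.mem_iff], ?_⟩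
  refine (List.pairwise_mergeSort (fun a b c hab hbc => ?_) (fun a b => ?_) _).imp (by simp)
  · simp only [decide_eq_true_eq] at *
    exact hbc.trans hab
  · simpa using le_total (f b) (f a)

namespace NFDH

variable {ι : Type*}

/-- Next-fit from the state `(cx, cy, sh)`: the open shelf has its bottom at `cy`, height `sh`,
and is filled up to `cx`. Returns the placements `(i, x, y)` made before the first rectangle that
fits neither on the open shelf nor on a new shelf on top of it, and the list from that
rectangle on. -/
noncomputable def run (w h : ι → ℝ) (W H : ℝ) : List ι → ℝ → ℝ → ℝ → List (ι × ℝ × ℝ) × List ι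
  | [], _, _, _ => ([], [])
  | i :: l, cx, cy, sh =>
    if cx + w i ≤ W then
      Prod.map ((i, cx, cy) :: ·) id (run w h W H l (cx + w i) cy sh)
    else if cy + sh + h i ≤ H then
      Prod.map ((i, 0, cy + sh) :: ·) id (run w h W H l (w i) (cy + sh) (h i))
    else ([], i :: l)

def Apart (w h : ι → ℝ) (q q' : ι × ℝ × ℝ) : Prop :=
  q.2.1 + w q.1 ≤ q'.2.1 ∨ q'.2.1 + w q'.1 ≤ q.2.1 ∨
    q.2.2 + h q.1 ≤ q'.2.2 ∨ q'.2.2 + h q'.1 ≤ q.2.2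

variable {w h : ι → ℝ} {W H : ℝ}

instance : Std.Symm (Apart w h) where
  symm _ _ hqq' := by unfold Apart at *; tauto

theorem map_fst_run_append_snd (l : List ι) (cx cy sh : ℝ) :
    (run w h W H l cx cy sh).1.map Prod.fst ++ (run w h W H l cx cy sh).2 = l := by
  induction l generalizing cx cy sh with
  | nil => simp [run]
  | cons i l ih =>
    rw [run]
    split_ifs
    · simpa using ih ..
    · simpa using ih ..
    · simp

theorem run_right_or_above {l : List ι} {cx cy sh : ℝ} (hl : ∀ j ∈ l, 0 ≤ w j ∧ 0 ≤ h j) :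
    ∀ q ∈ (run w h W H l cx cy sh).1, (q.2.2 = cy ∧ cx ≤ q.2.1) ∨ cy + sh ≤ q.2.2 := by
  induction l generalizing cx cy sh with
  | nil => simp [run]
  | cons i l ih =>
    obtain ⟨hwi, hhi⟩ := hl i List.mem_cons_self
    have hl' := fun j hj => hl j (List.mem_cons_of_mem i hj)
    rw [run]
    split_ifs
    · refine List.forall_mem_cons.2 ⟨.inl ⟨rfl, le_rfl⟩, fun q hq => ?_⟩
      rcases ih hl' q hq with ⟨hy, hx⟩ | hy
      · exact .inl ⟨hy, by linarith⟩
      · exact .inr hy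
    · refine List.forall_mem_cons.2 ⟨.inr le_rfl, fun q hq => .inr ?_⟩
      rcases ih hl' q hq with ⟨hy, -⟩ | hy <;> linarith
    · simp

theorem run_inside_box {l : List ι} {cx cy sh : ℝ} (hsort : l.Pairwise fun a b => h b ≤ h a)
    (hl : ∀ j ∈ l, 0 ≤ w j ∧ w j ≤ W ∧ 0 ≤ h j ∧ h j ≤ sh) (hcx : 0 ≤ cx) (hcy : 0 ≤ cy)
    (hH : cy + sh ≤ H) :
    ∀ q ∈ (run w h W H l cx cy sh).1,
      0 ≤ q.2.1 ∧ q.2.1 + w q.1 ≤ W ∧ 0 ≤ q.2.2 ∧ q.2.2 + h q.1 ≤ H := by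
  induction l generalizing cx cy sh with
  | nil => simp [run]
  | cons i l ih =>
    obtain ⟨hwi, hwiW, hhi, hhish⟩ := hl i List.mem_cons_self
    have hl' := fun j hj => hl j (List.mem_cons_of_mem i hj)
    rw [run]
    split_ifs with hfit hnew
    · refine List.forall_mem_cons.2 ⟨⟨hcx, hfit, hcy, by linarith⟩, ?_⟩
      exact ih hsort.of_cons hl' (by linarith) hcy hH
    · refine List.forall_mem_cons.2 ⟨⟨le_rfl, by simpa using hwiW, by linarith, hnew⟩, ?_⟩
      refine ih hsort.of_cons (fun j hj => ?_) hwi (by linarith) hnew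
      exact ⟨(hl' j hj).1, (hl' j hj).2.1, (hl' j hj).2.2.1, List.rel_of_pairwise_cons hsort hj⟩
    · simp

theorem run_pairwise_apart {l : List ι} {cx cy sh : ℝ} (hsort : l.Pairwise fun a b => h b ≤ h a)
    (hl : ∀ j ∈ l, 0 ≤ w j ∧ 0 ≤ h j ∧ h j ≤ sh) :
    (run w h W H l cx cy sh).1.Pairwise (Apart w h) := by
  induction l generalizing cx cy sh with
  | nil => simp [run]
  | cons i l ih =>
    obtain ⟨hwi, hhi, hhish⟩ := hl i List.mem_cons_self
    have hl' := fun j hj => hl j (List.mem_cons_of_mem i hj)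
    have hwh : ∀ j ∈ l, 0 ≤ w j ∧ 0 ≤ h j := fun j hj => ⟨(hl' j hj).1, (hl' j hj).2.1⟩
    rw [run]
    split_ifs
    · refine List.pairwise_cons.2 ⟨fun q hq => ?_, ih hsort.of_cons hl'⟩
      rcases run_right_or_above hwh q hq with ⟨-, hx⟩ | hy
      · exact .inl hx
      · exact .inr (.inr (.inl (by dsimp only; linarith)))
    · refine List.pairwise_cons.2 ⟨fun q hq => ?_, ih hsort.of_cons fun j hj =>
        ⟨(hl' j hj).1, (hl' j hj).2.1, List.rel_of_pairwise_cons hsort hj⟩⟩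
      rcases run_right_or_above hwh q hq with ⟨-, hx⟩ | hy
      · exact .inl (by dsimp only; linarith)
      · exact .inr (.inr (.inl hy))
    · simp

/-- A shelf is closed only when the next rectangle does not fit on it, so it is filled to width
more than `c`, and its area is at least `c` times the height of the next shelf (heights decrease).
The term `cx * g`, with `g` bounding the heights still to come, pays for the open shelf. -/
theorem run_area_ge {c : ℝ} (hc : 0 ≤ c) {l : List ι} {cx cy sh g : ℝ}
    (hsort : l.Pairwise fun a b => h b ≤ h a)
    (hl : ∀ j ∈ l, 0 ≤ w j ∧ w j ≤ W - c ∧ 0 ≤ h j ∧ h j ≤ g) (hcx : 0 ≤ cx)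
    (hstop : (run w h W H l cx cy sh).2 ≠ []) :
    c * (H - (cy + sh)) ≤ ((run w h W H l cx cy sh).1.map fun q => w q.1 * h q.1).sum + cx * g := by
  induction l generalizing cx cy sh g with
  | nil => simp [run] at hstop
  | cons i l ih =>
    obtain ⟨hwi, hwic, hhi, hhig⟩ := hl i List.mem_cons_self
    have hl' : ∀ j ∈ l, 0 ≤ w j ∧ w j ≤ W - c ∧ 0 ≤ h j ∧ h j ≤ h i := fun j hj =>
      ⟨(hl j (.tail i hj)).1, (hl j (.tail i hj)).2.1, (hl j (.tail i hj)).2.2.1,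
        List.rel_of_pairwise_cons hsort hj⟩
    have hclosed : ¬cx + w i ≤ W → c * h i ≤ cx * g := fun hfull =>
      mul_le_mul (by linarith) hhig hhi hcx
    rw [run] at hstop ⊢
    split_ifs at hstop ⊢ with hfit hnew
    · have := ih hsort.of_cons hl' (by linarith) hstop
      have := mul_le_mul_of_nonneg_left hhig hcx
      simp only [Prod.map_fst, List.map_cons, List.sum_cons]
      linarith
    · have := ih hsort.of_cons hl' hwi hstop
      have := hclosed hfit
      simp only [Prod.map_fst, List.map_cons, List.sum_cons]
      linarith
    · have := mul_le_mul_of_nonneg_left (by linarith : H - (cy + sh) ≤ h i) hc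
      have := hclosed hfit
      simp only [List.map_nil, List.sum_nil]
      linarith

theorem exists_isPacking_of_pairwise_apart [DecidableEq ι] (p : List (ι × ℝ × ℝ))
    (hbox : ∀ q ∈ p, 0 ≤ q.2.1 ∧ q.2.1 + w q.1 ≤ W ∧ 0 ≤ q.2.2 ∧ q.2.2 + h q.1 ≤ H)
    (hapart : p.Pairwise (Apart w h)) :
    ∃ x y, IsPacking (p.map Prod.fst).toFinset w h W H x y := by
  cases p with
  | nil => exact ⟨0, 0, by simp [IsPacking]⟩
  | cons q₀ p =>
    have : Nonempty (ι × ℝ × ℝ) := ⟨q₀⟩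
    have hkey : ∀ a ∈ ((q₀ :: p).map Prod.fst).toFinset, ∃ q ∈ q₀ :: p, q.1 = a := by
      simpa only [List.mem_toFinset, List.mem_map] using fun a ha => ha
    choose! q hqp hqa using hkey
    refine ⟨fun a => (q a).2.1, fun a => (q a).2.2, fun a ha => ?_, fun a ha b hb hab => ?_⟩
    · simpa only [hqa a ha] using hbox (q a) (hqp a ha)
    · have hne : q a ≠ q b := fun e => hab (by rw [← hqa a ha, e, hqa b hb])
      have := hapart.forall (hqp a ha) (hqp b hb) hne
      rwa [Apart, hqa a ha, hqa b hb] at this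

theorem exists_subset_isPacking [DecidableEq ι] {l : List ι} {ε : ℝ} (hnd : l.Nodup)
    (hsort : l.Pairwise fun a b => h b ≤ h a) (hW : 0 ≤ W) (hH : 0 ≤ H) (hε : ε ≤ 1)
    (hl : ∀ i ∈ l, 0 ≤ w i ∧ w i ≤ ε * W ∧ 0 ≤ h i ∧ h i ≤ ε * H) :
    ∃ t ⊆ l.toFinset, (∃ x y, IsPacking t w h W H x y) ∧
      (t = l.toFinset ∨ (1 - 2 * ε) * (W * H) ≤ ∑ i ∈ t, w i * h i) := by
  cases l with
  | nil => exact ⟨∅, by simp, ⟨0, 0, by simp [IsPacking]⟩, .inl rfl⟩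
  | cons i₀ l =>
    set r := run w h W H (i₀ :: l) 0 0 (h i₀)
    have hsplit : r.1.map Prod.fst ++ r.2 = i₀ :: l := map_fst_run_append_snd ..
    have hfirst : ∀ j ∈ i₀ :: l, h j ≤ h i₀ := List.forall_mem_cons.2
      ⟨le_rfl, fun j hj => List.rel_of_pairwise_cons hsort hj⟩
    have hεW : 0 ≤ (1 - ε) * W := mul_nonneg (by linarith) hW
    have hεW' : ε * W ≤ W := by nlinarith
    have hεH : ε * H ≤ H := by nlinarith
    have hpack := exists_isPacking_of_pairwise_apart r.1
      (run_inside_box hsort (fun j hj => ⟨(hl j hj).1, (hl j hj).2.1.trans hεW',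
        (hl j hj).2.2.1, hfirst j hj⟩) le_rfl le_rfl (by linarith [(hl i₀ (.head l)).2.2.2]))
      (run_pairwise_apart hsort fun j hj => ⟨(hl j hj).1, (hl j hj).2.2.1, hfirst j hj⟩)
    refine ⟨_, fun a ha => ?_, hpack, ?_⟩
    · rw [← hsplit, List.toFinset_append]
      exact Finset.mem_union_left _ ha
    rcases eq_or_ne r.2 [] with hdone | hstop
    · left
      rw [← List.append_nil (r.1.map Prod.fst), ← hdone, hsplit]
    right
    have harea := run_area_ge hεW hsort (fun j hj => ⟨(hl j hj).1, by linarith [(hl j hj).2.1],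
      (hl j hj).2.2.1, (hl j hj).2.2.2⟩) le_rfl hstop
    rw [List.sum_toFinset _ (hsplit ▸ hnd).of_append_left, List.map_map]
    calc (1 - 2 * ε) * (W * H) ≤ (1 - ε) * W * (H - ε * H) := by
          nlinarith [mul_nonneg (mul_nonneg hW hH) (sq_nonneg ε)]
      _ ≤ (1 - ε) * W * (H - (0 + h i₀)) := by
          gcongr
          linarith [(hl i₀ (.head l)).2.2.2]
      _ ≤ _ := by simpa [Function.comp_def] using harea

end NFDH

theorem nfdh_packs_large_area_general {ι : Type*} (s : Finset ι) (w h : ι → ℝ)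
    (W H ε : ℝ) (hW : 0 < W) (hH : 0 < H) (hε1 : ε < 1)
    (hdim : ∀ i ∈ s, 0 < w i ∧ w i ≤ ε * W ∧ 0 < h i ∧ h i ≤ ε * H) :
    (∃ s'' ⊆ s, (∃ x y, IsPacking s'' w h W H x y) ∧
      min (∑ i ∈ s, w i * h i) ((1 - 2 * ε) * (W * H)) ≤ ∑ i ∈ s'', w i * h i) ∧
    ((∑ i ∈ s, w i * h i) ≤ (1 - 2 * ε) * (W * H) →
      ∃ x y, IsPacking s w h W H x y) := by
  classical
  obtain ⟨l, hnd, rfl, hsort⟩ := List.exists_nodup_toFinset_eq_pairwise s h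
  obtain ⟨t, hts, hpack, hfull⟩ := NFDH.exists_subset_isPacking hnd hsort hW.le hH.le hε1.le
    fun i hi => by
      obtain ⟨hwi, hwiε, hhi, hhiε⟩ := hdim i (List.mem_toFinset.2 hi)
      exact ⟨hwi.le, hwiε, hhi.le, hhiε⟩
  have hlarge : min (∑ i ∈ l.toFinset, w i * h i) ((1 - 2 * ε) * (W * H)) ≤ ∑ i ∈ t, w i * h i := by
    rcases hfull with rfl | hbound
    · exact min_le_left _ _
    · exact (min_le_right _ _).trans hbound
  refine ⟨⟨t, hts, hpack, hlarge⟩, fun hsmall => ?_⟩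
  rw [min_eq_left hsmall] at hlarge
  rwa [← Finset.eq_of_subset_of_sum_le hts (fun i hi => mul_pos (hdim i hi).1 (hdim i hi).2.2.1)
    hlarge]

/-- **NFDH packing lemma.**  If every rectangle of the finite set `s` has width at most `ε·W`
and height at most `ε·H` (with `ε ∈ (0,1)`), then some subset `s'' ⊆ s` can be packed into the
`W × H` box with total area at least `min (a(s)) ((1-2ε)·W·H)`.  In particular, if
`a(s) ≤ (1-2ε)·W·H` then all rectangles of `s` can be packed. -/
theorem nfdh_packs_large_area {ι : Type*} (s : Finset ι) (w h : ι → ℝ)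
    (W H ε : ℝ) (hW : 0 < W) (hH : 0 < H) (hε0 : 0 < ε) (hε1 : ε < 1)
    (hdim : ∀ i ∈ s, 0 < w i ∧ w i ≤ ε * W ∧ 0 < h i ∧ h i ≤ ε * H) :
    (∃ s'' ⊆ s, (∃ x y, IsPacking s'' w h W H x y) ∧
      min (∑ i ∈ s, w i * h i) ((1 - 2 * ε) * (W * H)) ≤ ∑ i ∈ s'', w i * h i) ∧
    ((∑ i ∈ s, w i * h i) ≤ (1 - 2 * ε) * (W * H) →
      ∃ x y, IsPacking s w h W H x y) :=
  nfdh_packs_large_area_general s w h W H ε hW hH hε1 hdim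
end

section
/- Let a set R_j of items be packed in a knapsack bin j of capacity c_j (each item i has size s_{ij} > 0 and the sizes of items in R_j sum to at most c_j), and let ε ∈ (0,1) with 1/ε an integer. Then there exist a set X_j ⊆ R_j with |X_j| ≤ 1/ε² and a set Y_j ⊆ R_j with profit p(Y_j) ≤ ε·p(R_j), such that every item in R_j \ (X_j ∪ Y_j) has size at most ε·(c_j − Σ_{i∈X_j} s_{ij}). -/
/-!
Greedily peel off layers of big items: starting from `X₀ = ∅`, let `Bₖ` be the items of
`R \ Xₖ` of size more than `ε` times the residual capacity `c - sz(Xₖ)`, and `Xₖ₊₁ = Xₖ ∪ Bₖ`.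
The items of `Bₖ` fit into that residual capacity, so `|Bₖ| ≤ 1/ε`. The layers are disjoint,
so among the first `m = ⌈1/ε⌉` of them some `Bₜ` carries at most an `ε` fraction of the profit;
take `X = Xₜ` (at most `t/ε < 1/ε²` items) and `Y = Bₜ`. Every other item is small by the
definition of `Bₜ`.
-/

open Finset

section BigItems

variable {ι : Type*} [DecidableEq ι] (R : Finset ι) (sz : ι → ℝ) (c ε : ℝ)

noncomputable def bigItems (X : Finset ι) : Finset ι :=
  (R \ X).filter fun i => ε * (c - ∑ j ∈ X, sz j) < sz i

noncomputable def bigLayers : ℕ → Finset ι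
  | 0 => ∅
  | k + 1 => bigLayers k ∪ bigItems R sz c ε (bigLayers k)

variable {R sz c ε}

theorem bigItems_subset_sdiff (X : Finset ι) : bigItems R sz c ε X ⊆ R \ X :=
  filter_subset _ _

theorem le_of_notMem_bigItems {X : Finset ι} {i : ι} (hiR : i ∈ R) (hiX : i ∉ X)
    (hiB : i ∉ bigItems R sz c ε X) : sz i ≤ ε * (c - ∑ j ∈ X, sz j) := by
  simpa [bigItems, hiR, hiX] using hiB

theorem card_bigItems_mul_le (hsz : ∀ i ∈ R, 0 ≤ sz i) (hc : ∑ i ∈ R, sz i ≤ c)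
    {X : Finset ι} (hX : X ⊆ R) : ((bigItems R sz c ε X).card : ℝ) * ε ≤ 1 := by
  set B := bigItems R sz c ε X
  set r := c - ∑ j ∈ X, sz j
  have hBR : B ⊆ R \ X := bigItems_subset_sdiff X
  have hsum_le : ∑ i ∈ B, sz i ≤ r := by
    have hsdiff := sum_sdiff hX (f := sz)
    have hBle := sum_le_sum_of_subset_of_nonneg hBR fun i hi _ => hsz i (mem_sdiff.1 hi).1
    linarith
  have hr : 0 ≤ r := by
    have hXle := sum_le_sum_of_subset_of_nonneg hX fun i hi _ => hsz i hi
    linarith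
  have hbig : ∀ i ∈ B, ε * r < sz i := fun i hi => (mem_filter.1 hi).2
  have hcard : (B.card : ℝ) * (ε * r) ≤ ∑ i ∈ B, sz i := by
    simpa using card_nsmul_le_sum B sz (ε * r) fun i hi => (hbig i hi).le
  obtain hB | ⟨i, hi⟩ := B.eq_empty_or_nonempty
  · simp [hB]
  -- the big item `i` fits into `r` yet exceeds `ε * r`, which rules out `r = 0`
  have hr_pos : 0 < r := by
    refine hr.lt_of_ne fun h0 => ?_
    have hi_le := single_le_sum (fun j hj => hsz j (mem_sdiff.1 (hBR hj)).1) hi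
    have hi_big := hbig i hi
    rw [← h0, mul_zero] at hi_big
    linarith
  nlinarith

variable (R sz c ε) in
theorem bigLayers_subset (k : ℕ) : bigLayers R sz c ε k ⊆ R := by
  induction k with
  | zero => exact empty_subset R
  | succ k ih => exact union_subset ih ((bigItems_subset_sdiff _).trans sdiff_subset)

theorem card_bigLayers_mul_le (hsz : ∀ i ∈ R, 0 ≤ sz i) (hc : ∑ i ∈ R, sz i ≤ c) (hε : 0 ≤ ε)
    (k : ℕ) :
    ((bigLayers R sz c ε k).card : ℝ) * ε ≤ k := by
  induction k with
  | zero => simp [bigLayers]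
  | succ k ih =>
    have hunion : ((bigLayers R sz c ε (k + 1)).card : ℝ) ≤
        (bigLayers R sz c ε k).card + (bigItems R sz c ε (bigLayers R sz c ε k)).card := by
      exact_mod_cast card_union_le _ _
    have hB := card_bigItems_mul_le (ε := ε) hsz hc (bigLayers_subset R sz c ε k)
    push_cast
    nlinarith

theorem sum_bigLayers (p : ι → ℝ) (t : ℕ) :
    ∑ i ∈ bigLayers R sz c ε t, p i =
      ∑ k ∈ range t, ∑ i ∈ bigItems R sz c ε (bigLayers R sz c ε k), p i := by
  induction t with
  | zero => simp [bigLayers]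
  | succ t ih =>
    rw [bigLayers, sum_union (disjoint_sdiff.mono_right (bigItems_subset_sdiff _)),
      sum_range_succ, ih]

theorem exists_lt_sum_bigItems_le {p : ι → ℝ} (hp : ∀ i ∈ R, 0 ≤ p i) {m : ℕ} (hm : 0 < m)
    (hmε : 1 ≤ (m : ℝ) * ε) :
    ∃ t < m, ∑ i ∈ bigItems R sz c ε (bigLayers R sz c ε t), p i ≤ ε * ∑ i ∈ R, p i := by
  have hpR : 0 ≤ ∑ i ∈ R, p i := sum_nonneg hp
  have hlayers : ∑ k ∈ range m, ∑ i ∈ bigItems R sz c ε (bigLayers R sz c ε k), p i ≤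
      ∑ k ∈ range m, ε * ∑ i ∈ R, p i :=
    calc _ = ∑ i ∈ bigLayers R sz c ε m, p i := (sum_bigLayers p m).symm
      _ ≤ ∑ i ∈ R, p i :=
          sum_le_sum_of_subset_of_nonneg (bigLayers_subset R sz c ε m) fun i hi _ => hp i hi
      _ ≤ ∑ k ∈ range m, ε * ∑ i ∈ R, p i := by
          rw [sum_const, card_range, nsmul_eq_mul]
          nlinarith
  simpa using exists_le_of_sum_le (nonempty_range_iff.2 hm.ne') hlayers

end BigItems

theorem gap_shifting_general {ι : Type*} [DecidableEq ι]
    (R : Finset ι) (sz p : ι → ℝ) (c ε : ℝ)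
    (hsz : ∀ i ∈ R, 0 < sz i) (hp : ∀ i ∈ R, 0 ≤ p i)
    (hc : ∑ i ∈ R, sz i ≤ c)
    (hε0 : 0 < ε) :
    ∃ X ⊆ R, ∃ Y ⊆ R, (X.card : ℝ) ≤ 1 / ε ^ 2 ∧
      (∑ i ∈ Y, p i) ≤ ε * ∑ i ∈ R, p i ∧
      ∀ i ∈ R \ (X ∪ Y), sz i ≤ ε * (c - ∑ j ∈ X, sz j) := by
  have hsz' : ∀ i ∈ R, 0 ≤ sz i := fun i hi => (hsz i hi).le
  set m := ⌈1 / ε⌉₊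
  have hmε : 1 ≤ (m : ℝ) * ε := (div_le_iff₀ hε0).1 (Nat.le_ceil _)
  obtain ⟨t, htm, hBt⟩ := exists_lt_sum_bigItems_le hp (Nat.ceil_pos.2 (by positivity)) hmε
  refine ⟨bigLayers R sz c ε t, bigLayers_subset R sz c ε t, _,
    (bigItems_subset_sdiff _).trans sdiff_subset, ?_, hBt, ?_⟩
  · have htε : (t : ℝ) * ε < 1 := (lt_div_iff₀ hε0).1 (Nat.lt_ceil.1 htm)
    have hcard := card_bigLayers_mul_le hsz' hc hε0.le t
    rw [le_div_iff₀ (by positivity)]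
    nlinarith
  · intro i hi
    simp only [mem_sdiff, mem_union, not_or] at hi
    exact le_of_notMem_bigItems hi.1 hi.2.1 hi.2.2

/-- **GAP shifting lemma.**  Let a set `R` of items with positive sizes `sz` (summing to at
most the capacity `c`) and nonnegative profits `p` be packed in a bin, and let `ε ∈ (0,1)`
with `1/ε` integral.  Then there are `X ⊆ R` with `|X| ≤ 1/ε²` and `Y ⊆ R` with
`p(Y) ≤ ε·p(R)` such that every item of `R \ (X ∪ Y)` has size at most
`ε·(c − Σ_{i∈X} sz i)`. -/
theorem gap_shifting {ι : Type*} [DecidableEq ι]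
    (R : Finset ι) (sz p : ι → ℝ) (c ε : ℝ)
    (hsz : ∀ i ∈ R, 0 < sz i) (hp : ∀ i ∈ R, 0 ≤ p i)
    (hc : ∑ i ∈ R, sz i ≤ c)
    (hε0 : 0 < ε) (hε1 : ε < 1) (hεint : ∃ m : ℕ, 0 < m ∧ ε = 1 / (m : ℝ)) :
    ∃ X ⊆ R, ∃ Y ⊆ R, (X.card : ℝ) ≤ 1 / ε ^ 2 ∧
      (∑ i ∈ Y, p i) ≤ ε * ∑ i ∈ R, p i ∧
      ∀ i ∈ R \ (X ∪ Y), sz i ≤ ε * (c - ∑ j ∈ X, sz j) :=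
  gap_shifting_general R sz p c ε hsz hp hc hε0
end

section
/- Let ε ∈ (0,1) and k ≥ 1/ε, and let R be a finite set of rectangles packed in a horizontal container C (i.e., any horizontal line crosses at most one rectangle, equivalently the rectangles are stacked vertically, so their heights sum to at most h(C) and each width is at most w(C)). Then there is a subset R' ⊆ R with p(R') ≥ (1−ε)·p(R) that can be packed in a container C' with w(C') ≤ w(C), h(C') ≤ h(C), where w(C') is the width of some rectangle in R and h(C') is expressible as a sum of at most k heights of rectangles in R plus an integer multiple (between 0 and |R|) of the height of one rectangle in R. -/
/-!
Keep the widest rectangle's width. If `R` has at most `k` rectangles, nothing needs rounding.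
Otherwise let `S` be the `k + 1` tallest rectangles and drop the least profitable one `t ∈ S`,
which loses at most `p(R) / (k + 1) ≤ ε p(R)`. The other `k` rectangles of `S` are kept exactly,
and all rectangles outside `S` are at most as tall as the shortest one `j ∈ S`, so their total
height rounds up to a multiple `m · h j` with `m ≤ |R|`. Rounding up costs less than
`h j ≤ h t`, which is exactly the height freed by dropping `t`.
-/

open Finset

namespace Finset

variable {ι : Type*} [DecidableEq ι]

theorem exists_subset_card_eq_forall_sdiff_le {β : Type*} [LinearOrder β] (f : ι → β)
    {s : Finset ι} {n : ℕ} (hn : n ≤ #s) :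
    ∃ t ⊆ s, #t = n ∧ ∀ i ∈ t, ∀ j ∈ s \ t, f j ≤ f i := by
  induction n with
  | zero => exact ⟨∅, empty_subset s, rfl, by simp⟩
  | succ n ih =>
    obtain ⟨t, hts, htn, htop⟩ := ih (Nat.le_of_succ_le hn)
    have hrest : (s \ t).Nonempty := by
      rw [← card_pos, card_sdiff_of_subset hts]
      omega
    obtain ⟨a, ha, hamax⟩ := exists_max_image (s \ t) f hrest
    rw [mem_sdiff] at ha
    refine ⟨insert a t, insert_subset ha.1 hts, by rw [card_insert_of_notMem ha.2, htn], ?_⟩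
    intro i hi j hj
    have hj' : j ∈ s \ t := by
      simp only [mem_sdiff, mem_insert, not_or] at hj ⊢
      exact ⟨hj.1, hj.2.2⟩
    rcases mem_insert.mp hi with rfl | hit
    · exact hamax j hj'
    · exact htop i hit j hj'

end Finset

section Rounding

variable {ι : Type*}

theorem exists_nat_le_card_sum_le_mul_le_sum_add {s : Finset ι} {f : ι → ℝ} {c : ℝ}
    (hc : 0 < c) (hf0 : ∀ i ∈ s, 0 ≤ f i) (hfc : ∀ i ∈ s, f i ≤ c) :
    ∃ m ≤ #s, ∑ i ∈ s, f i ≤ m * c ∧ m * c ≤ ∑ i ∈ s, f i + c := by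
  have hq : 0 ≤ (∑ i ∈ s, f i) / c := div_nonneg (sum_nonneg hf0) hc.le
  refine ⟨⌈(∑ i ∈ s, f i) / c⌉₊, ?_, ?_, ?_⟩
  · refine Nat.ceil_le.mpr ((div_le_iff₀ hc).mpr ?_)
    simpa using sum_le_sum hfc
  · exact (div_le_iff₀ hc).mp (Nat.le_ceil _)
  · have := mul_le_mul_of_nonneg_right (Nat.ceil_lt_add_one hq).le hc.le
    rwa [add_mul, one_mul, div_mul_cancel₀ _ hc.ne'] at this

variable [DecidableEq ι]

theorem exists_erase_le_sum_add_mul_le_sum {R S : Finset ι} {h : ι → ℝ} (hSR : S ⊆ R)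
    (htop : ∀ i ∈ S, ∀ j ∈ R \ S, h j ≤ h i) (hpos : ∀ i ∈ R, 0 < h i) {t : ι} (ht : t ∈ S) :
    ∃ j ∈ R, ∃ m ≤ #R, ∑ i ∈ R.erase t, h i ≤ ∑ i ∈ S.erase t, h i + m * h j ∧
      ∑ i ∈ S.erase t, h i + m * h j ≤ ∑ i ∈ R, h i := by
  obtain ⟨j, hjS, hjmin⟩ := exists_min_image S h ⟨t, ht⟩
  obtain ⟨m, hm, hlow, hhigh⟩ := exists_nat_le_card_sum_le_mul_le_sum_add (s := R \ S)
    (hpos j (hSR hjS)) (fun i hi => (hpos i (mem_sdiff.mp hi).1).le)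
    (fun i hi => htop j hjS i hi)
  have hsplit_R : ∑ i ∈ R, h i = h t + ∑ i ∈ S.erase t, h i + ∑ i ∈ R \ S, h i := by
    rw [add_sum_erase S h ht, add_comm, sum_sdiff hSR]
  have hsplit_erase : ∑ i ∈ R.erase t, h i = ∑ i ∈ R, h i - h t :=
    sum_erase_eq_sub (hSR ht)
  refine ⟨j, hSR hjS, m, hm.trans (card_le_card sdiff_subset), ?_, ?_⟩
  · linarith
  · linarith [hjmin t ht]

theorem exists_erase_sum_ge_one_sub_mul {R S : Finset ι} {p : ι → ℝ} (hSR : S ⊆ R)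
    (hp : ∀ i ∈ R, 0 ≤ p i) {k : ℕ} (hS : #S = k + 1) {ε : ℝ} (hεk : 1 ≤ ε * k) :
    ∃ t ∈ S, (1 - ε) * ∑ i ∈ R, p i ≤ ∑ i ∈ R.erase t, p i := by
  obtain ⟨t, htS, htmin⟩ := exists_min_image S p (card_pos.mp (by omega))
  refine ⟨t, htS, ?_⟩
  have hcount : ((k : ℝ) + 1) * p t ≤ ∑ i ∈ S, p i := by
    simpa [hS] using card_nsmul_le_sum S p (p t) htmin
  have hSR_sum : ∑ i ∈ S, p i ≤ ∑ i ∈ R, p i :=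
    sum_le_sum_of_subset_of_nonneg hSR fun i hi _ => hp i hi
  have hpt : 0 ≤ p t := hp t (hSR htS)
  have hε : 0 ≤ ε := (pos_of_mul_pos_left (one_pos.trans_le hεk) k.cast_nonneg).le
  rw [sum_erase_eq_sub (hSR htS)]
  linarith [mul_le_mul_of_nonneg_left (hcount.trans hSR_sum) hε,
    mul_le_mul_of_nonneg_right hεk hpt, mul_nonneg hε hpt]

end Rounding

theorem round_horizontal_container_general {ι : Type*}
    (R : Finset ι) (hR : R.Nonempty) (w h p : ι → ℝ) (W H ε : ℝ) (k : ℕ)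
    (hε0 : 0 < ε) (hk : 1 / ε ≤ (k : ℝ))
    (hpos : ∀ i ∈ R, 0 < w i ∧ 0 < h i ∧ 0 < p i)
    (hwidth : ∀ i ∈ R, w i ≤ W) (hheight : ∑ i ∈ R, h i ≤ H) :
    ∃ R' ⊆ R, (1 - ε) * ∑ i ∈ R, p i ≤ ∑ i ∈ R', p i ∧
      ∃ W' H' : ℝ, W' ≤ W ∧ H' ≤ H ∧
        (∃ i ∈ R, W' = w i) ∧
        (∃ l : Finset ι, l ⊆ R ∧ l.card ≤ k ∧
          ∃ j ∈ R, ∃ m : ℕ, m ≤ R.card ∧ H' = (∑ i ∈ l, h i) + (m : ℝ) * h j) ∧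
        (∀ i ∈ R', w i ≤ W') ∧ (∑ i ∈ R', h i ≤ H') := by
  classical
  obtain ⟨a, haR, hwidest⟩ := exists_max_image R w hR
  suffices ∃ R' ⊆ R, (1 - ε) * ∑ i ∈ R, p i ≤ ∑ i ∈ R', p i ∧
      ∃ l ⊆ R, #l ≤ k ∧ ∃ j ∈ R, ∃ m ≤ #R,
        ∑ i ∈ R', h i ≤ ∑ i ∈ l, h i + m * h j ∧ ∑ i ∈ l, h i + m * h j ≤ ∑ i ∈ R, h i by
    obtain ⟨R', hR'R, hprofit, l, hlR, hlk, j, hjR, m, hm, hfit, hround⟩ := this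
    exact ⟨R', hR'R, hprofit, w a, _, hwidth a haR, hround.trans hheight, ⟨a, haR, rfl⟩,
      ⟨l, hlR, hlk, j, hjR, m, hm, rfl⟩, fun i hi => hwidest i (hR'R hi), hfit⟩
  rcases le_or_gt #R k with hRk | hkR
  · have hp : 0 ≤ ∑ i ∈ R, p i := sum_nonneg fun i hi => (hpos i hi).2.2.le
    exact ⟨R, subset_rfl, by linarith [mul_nonneg hε0.le hp], R, subset_rfl, hRk, a, haR, 0,
      Nat.zero_le _, by simp, by simp⟩
  · have hεk : 1 ≤ ε * k := by rwa [div_le_iff₀ hε0, mul_comm] at hk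
    obtain ⟨S, hSR, hS, htop⟩ :=
      exists_subset_card_eq_forall_sdiff_le h (Nat.succ_le_of_lt hkR)
    obtain ⟨t, htS, hprofit⟩ :=
      exists_erase_sum_ge_one_sub_mul hSR (fun i hi => (hpos i hi).2.2.le) hS hεk
    obtain ⟨j, hjR, m, hm, hfit, hround⟩ :=
      exists_erase_le_sum_add_mul_le_sum hSR htop (fun i hi => (hpos i hi).2.1) htS
    exact ⟨R.erase t, erase_subset t R, hprofit, S.erase t,
      (erase_subset t S).trans hSR, by rw [card_erase_of_mem htS, hS]; omega,
      j, hjR, m, hm, hfit, hround⟩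

/-- **Rounding a horizontal container.**  Let `R` be a nonempty finite set of rectangles
(positive widths `w`, heights `h`, profits `p`) packed in a horizontal container of width `W`
and height `H`, i.e. every width is at most `W` and the heights sum to at most `H`.
Then for any `ε ∈ (0,1)` and `k ≥ 1/ε` there is a subset `R' ⊆ R` with
`p(R') ≥ (1-ε)·p(R)` packed in a smaller horizontal container `C'` of width `W' ≤ W` and
height `H' ≤ H`, where `W'` is the width of some rectangle of `R`, and `H'` is a sum of at
most `k` heights of rectangles of `R` plus an integer multiple (between `0` and `|R|`)
of the height of one rectangle of `R`. -/
theorem round_horizontal_container {ι : Type*} [DecidableEq ι]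
    (R : Finset ι) (hR : R.Nonempty) (w h p : ι → ℝ) (W H ε : ℝ) (k : ℕ)
    (hε0 : 0 < ε) (hε1 : ε < 1) (hk : 1 / ε ≤ (k : ℝ))
    (hpos : ∀ i ∈ R, 0 < w i ∧ 0 < h i ∧ 0 < p i)
    (hwidth : ∀ i ∈ R, w i ≤ W) (hheight : ∑ i ∈ R, h i ≤ H) :
    ∃ R' ⊆ R, (1 - ε) * ∑ i ∈ R, p i ≤ ∑ i ∈ R', p i ∧
      ∃ W' H' : ℝ, W' ≤ W ∧ H' ≤ H ∧
        (∃ i ∈ R, W' = w i) ∧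
        (∃ l : Finset ι, l ⊆ R ∧ l.card ≤ k ∧
          ∃ j ∈ R, ∃ m : ℕ, m ≤ R.card ∧ H' = (∑ i ∈ l, h i) + (m : ℝ) * h j) ∧
        (∀ i ∈ R', w i ≤ W') ∧ (∑ i ∈ R', h i ≤ H') :=
  round_horizontal_container_general R hR w h p W H ε k hε0 hk hpos hwidth hheight
end

section
/- Given n rectangles with total area at most W·OPT (where OPT ≥ h_i for all i), any constant ε ∈ (0,1), a positive integer k, and a polynomial-time computable function f : (0,1) → (0,1) with f(x) < x: among the T = 2·(1/ε)^k candidate threshold values δ_1 = ε, δ_{j+1} = f(δ_j), there exists an index j such that the total area of rectangles i whose height h_i lies in (f(δ_j)·OPT, δ_j·OPT) or whose width w_i lies in ((ε·f(δ_j)/12)·W, (ε·δ_j/12)·W) is at most ε^k·OPT·W. -/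
open Finset Function

/-!
The thresholds `d j` decrease, so the height ranges `(d (j+1)·OPT, d j·OPT)` are pairwise
disjoint, and so are the width ranges `(ε·d (j+1)·W/12, ε·d j·W/12)`. Hence every rectangle is
medium for at most two of the `T` indices, and the areas of the medium rectangles summed over all
indices are at most `2·W·OPT = T·ε^k·OPT·W`; some index is at most the average.
-/

theorem antitone_of_succ_eq_apply {α : Type*} [Preorder α] {S : Set α} {f : α → α}
    (hf : ∀ x ∈ S, f x ∈ S ∧ f x ≤ x) {d : ℕ → α} (hd0 : d 0 ∈ S)
    (hdS : ∀ j, d (j + 1) = f (d j)) : Antitone d := by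
  have hmem : ∀ j, d j ∈ S := fun j => by
    induction j with
    | zero => exact hd0
    | succ j ih => exact hdS j ▸ (hf _ ih).1
  exact antitone_nat_of_succ_le fun j => hdS j ▸ (hf _ (hmem j)).2

theorem Finset.card_filter_mem_le_one_of_pairwise_disjoint {α κ : Type*} {I : κ → Set α}
    (hI : Pairwise (Disjoint on I)) (t : Finset κ) (x : α) [DecidablePred (x ∈ I ·)] :
    #{j ∈ t | x ∈ I j} ≤ 1 :=
  card_le_one.2 fun j₁ h₁ j₂ h₂ => by
    by_contra hne
    exact Set.disjoint_left.1 (hI hne) (mem_filter.1 h₁).2 (mem_filter.1 h₂).2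

theorem Antitone.card_filter_mem_Ioo_succ_le_one {α : Type*} [Preorder α] [DecidableLT α]
    {u : ℕ → α} (hu : Antitone u) (t : Finset ℕ) (x : α) :
    #{j ∈ t | u (j + 1) < x ∧ x < u j} ≤ 1 := by
  simpa [Order.succ_eq_add_one] using
    card_filter_mem_le_one_of_pairwise_disjoint hu.pairwise_disjoint_on_Ioo_succ t x

theorem Antitone.card_filter_mem_Ioo_succ_or_le_two {α β : Type*} [Preorder α] [DecidableLT α]
    [Preorder β] [DecidableLT β] {u : ℕ → α} {v : ℕ → β} (hu : Antitone u) (hv : Antitone v)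
    (t : Finset ℕ) (x : α) (y : β) :
    #{j ∈ t | (u (j + 1) < x ∧ x < u j) ∨ (v (j + 1) < y ∧ y < v j)} ≤ 2 := by
  rw [filter_or]
  exact (card_union_le _ _).trans
    (add_le_add (hu.card_filter_mem_Ioo_succ_le_one t x) (hv.card_filter_mem_Ioo_succ_le_one t y))

section Averaging

variable {ι κ R : Type*} [CommSemiring R] [LinearOrder R] [IsStrictOrderedRing R]
  {s : Finset ι} {t : Finset κ} {P : κ → ι → Prop} [∀ j i, Decidable (P j i)] {a : ι → R}

theorem Finset.sum_sum_filter_le_mul_sum (ha : ∀ i ∈ s, 0 ≤ a i) {c : ℕ}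
    (hc : ∀ i ∈ s, #{j ∈ t | P j i} ≤ c) :
    ∑ j ∈ t, ∑ i ∈ s with P j i, a i ≤ c * ∑ i ∈ s, a i := by
  calc ∑ j ∈ t, ∑ i ∈ s with P j i, a i
      = ∑ i ∈ s, (#{j ∈ t | P j i} : R) * a i := by
        simp only [sum_filter]
        rw [sum_comm]
        refine sum_congr rfl fun i _ => ?_
        rw [← sum_filter, sum_const, nsmul_eq_mul]
    _ ≤ ∑ i ∈ s, (c : R) * a i :=
        sum_le_sum fun i hi => mul_le_mul_of_nonneg_right (by exact_mod_cast hc i hi) (ha i hi)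
    _ = c * ∑ i ∈ s, a i := (mul_sum _ _ _).symm

theorem Finset.exists_sum_filter_le_of_card_filter_le (ht : t.Nonempty)
    (ha : ∀ i ∈ s, 0 ≤ a i) {c : ℕ} (hc : ∀ i ∈ s, #{j ∈ t | P j i} ≤ c) {B : R}
    (hB : c * ∑ i ∈ s, a i ≤ #t * B) : ∃ j ∈ t, ∑ i ∈ s with P j i, a i ≤ B := by
  refine exists_le_of_sum_le ht ?_
  rw [sum_const, nsmul_eq_mul]
  exact (sum_sum_filter_le_mul_sum ha hc).trans hB

end Averaging

theorem medium_threshold_choice_general {ι : Type*} (s : Finset ι) (w h : ι → ℝ)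
    (W OPT ε : ℝ) (k m : ℕ) (hm : 0 < m) (hε : ε = 1 / (m : ℝ)) (hε1 : ε < 1)
    (f : ℝ → ℝ) (hf : ∀ x : ℝ, 0 < x → x < 1 → 0 < f x ∧ f x < x)
    (hdim : ∀ i ∈ s, 0 < w i ∧ w i ≤ W ∧ 0 < h i ∧ h i ≤ OPT)
    (harea : ∑ i ∈ s, w i * h i ≤ W * OPT)
    (d : ℕ → ℝ) (hd0 : d 0 = ε) (hdS : ∀ j : ℕ, d (j + 1) = f (d j)) :
    ∃ j < 2 * m ^ k,
      ∑ i ∈ s.filter (fun i =>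
          (f (d j) * OPT < h i ∧ h i < d j * OPT) ∨
          (ε * f (d j) / 12 * W < w i ∧ w i < ε * d j / 12 * W)), w i * h i
        ≤ ε ^ k * OPT * W := by
  have hε0 : 0 < ε := hε ▸ by positivity
  have hd : Antitone d := antitone_of_succ_eq_apply (S := Set.Ioo 0 1)
    (fun x hx => have hfx := hf x hx.1 hx.2; ⟨⟨hfx.1, hfx.2.trans hx.2⟩, hfx.2.le⟩)
    (hd0 ▸ ⟨hε0, hε1⟩) hdS
  have hcount : ∀ i ∈ s, #{j ∈ range (2 * m ^ k) |
      (d (j + 1) * OPT < h i ∧ h i < d j * OPT) ∨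
      (ε * d (j + 1) / 12 * W < w i ∧ w i < ε * d j / 12 * W)} ≤ 2 := by
    intro i hi
    obtain ⟨hw0, hwW, hh0, hhOPT⟩ := hdim i hi
    have hW : 0 ≤ W := (hw0.trans_le hwW).le
    have hwidth : Antitone fun j => ε * d j / 12 * W := fun a b hab => by
      dsimp only
      gcongr
      exact hd hab
    exact (hd.mul_const (hh0.trans_le hhOPT).le).card_filter_mem_Ioo_succ_or_le_two hwidth _ _ _
  have hTε : ((2 * m ^ k : ℕ) : ℝ) * ε ^ k = 2 := by
    rw [hε, one_div, inv_pow]; push_cast; field_simp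
  simp only [← hdS, ← mem_range]
  refine exists_sum_filter_le_of_card_filter_le (nonempty_range_iff.2 (by positivity))
    (fun i hi => (mul_pos (hdim i hi).1 (hdim i hi).2.2.1).le) hcount ?_
  rw [card_range, ← mul_assoc, ← mul_assoc, hTε]
  push_cast
  linarith

/-- **Choosing medium thresholds by averaging.**  Given `n` rectangles of total area at most
`W·OPT`, a constant `ε = 1/m ∈ (0,1)`, a positive integer `k`, and a function
`f : (0,1) → (0,1)` with `f x < x`, define the candidate thresholds by `d 0 = ε` and
`d (j+1) = f (d j)`.  Then among the first `T = 2·(1/ε)^k = 2·m^k` candidates there is an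
index `j` such that the total area of rectangles whose height lies in
`(f(d j)·OPT, d j·OPT)` or whose width lies in `((ε·f(d j)/12)·W, (ε·d j/12)·W)` is at most
`ε^k·OPT·W`. -/
theorem medium_threshold_choice {ι : Type*} (s : Finset ι) (w h : ι → ℝ)
    (W OPT ε : ℝ) (k m : ℕ) (hm : 0 < m) (hε : ε = 1 / (m : ℝ)) (hε1 : ε < 1)
    (hk : 0 < k) (hW : 0 < W) (hOPT : 0 < OPT)
    (f : ℝ → ℝ) (hf : ∀ x : ℝ, 0 < x → x < 1 → 0 < f x ∧ f x < x)
    (hdim : ∀ i ∈ s, 0 < w i ∧ w i ≤ W ∧ 0 < h i ∧ h i ≤ OPT)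
    (harea : ∑ i ∈ s, w i * h i ≤ W * OPT)
    (d : ℕ → ℝ) (hd0 : d 0 = ε) (hdS : ∀ j : ℕ, d (j + 1) = f (d j)) :
    ∃ j < 2 * m ^ k,
      ∑ i ∈ s.filter (fun i =>
          (f (d j) * OPT < h i ∧ h i < d j * OPT) ∨
          (ε * f (d j) / 12 * W < w i ∧ w i < ε * d j / 12 * W)), w i * h i
        ≤ ε ^ k * OPT * W :=
  medium_threshold_choice_general s w h W OPT ε k m hm hε hε1 f hf hdim harea d hd0 hdS
end

section
/- Let f, g : {1,…,w̄} → ℝ≥0 be functions with Σ_i f(i) = Σ_i g(i). Suppose there are reals h̄ > 0, γ ∈ (0,1], ε ∈ (0,1), α ∈ (ε, 1) such that: for every index i with g(i) < f(i) we have f(i) − g(i) ≥ γ·h̄/(1+ε), and for every index i we have g(i) ≤ (1 − 2α/(1+ε))·h̄. Let G = { i : g(i) ≥ f(i) }. Then |G| ≥ γ·w̄ / (1 + ε − 2α + γ); in particular, if γ ≤ ε < α, then |G| ≥ γ·w̄. -/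
open Finset

/-!
Every index where `g` falls below `f` loses at least `γ·h̄/(1+ε)`, and since the sums agree
this loss is recovered on the good indices, each of which gains at most
`g i - f i ≤ g i ≤ (1 − 2α/(1+ε))·h̄` because `f ≥ 0`. Hence `γ·|B| ≤ (1 + ε − 2α)·|G|` for
the bad set `B`, and adding `γ·|G|` to both sides gives `γ·w̄ ≤ (1 + ε − 2α + γ)·|G|`.
-/

lemma div_le_of_le_mul_of_nonneg {K : Type*} [Field K] [LinearOrder K] [IsStrictOrderedRing K]
    {a c d : K} (ha : 0 ≤ a) (hc : 0 ≤ c) (h : a ≤ c * d) : a / d ≤ c := by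
  rcases le_or_gt d 0 with hd | hd
  · exact (div_nonpos_of_nonneg_of_nonpos ha hd).trans hc
  · exact div_le_of_le_mul₀ hd.le hc h

section Balance

variable {ι : Type*} (s : Finset ι) (f g : ι → ℝ)

lemma sum_filter_not_le_sub_eq_sum_filter_le_sub (hsum : ∑ i ∈ s, f i = ∑ i ∈ s, g i) :
    ∑ i ∈ s with ¬ f i ≤ g i, (f i - g i) = ∑ i ∈ s with f i ≤ g i, (g i - f i) := by
  have htotal :
      ∑ i ∈ s with f i ≤ g i, (f i - g i) + ∑ i ∈ s with ¬ f i ≤ g i, (f i - g i) = 0 := by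
    rw [sum_filter_add_sum_filter_not, sum_sub_distrib, hsum, sub_self]
  rw [← neg_eq_iff_add_eq_zero.mpr htotal, ← sum_neg_distrib]
  exact sum_congr rfl fun _ _ => neg_sub _ _

variable {f g}

lemma card_filter_not_le_mul_le_card_filter_le_mul (hsum : ∑ i ∈ s, f i = ∑ i ∈ s, g i)
    {c C : ℝ} (hgap : ∀ i ∈ s, g i < f i → c ≤ f i - g i)
    (hcap : ∀ i ∈ s, f i ≤ g i → g i - f i ≤ C) :
    #{i ∈ s | ¬ f i ≤ g i} * c ≤ #{i ∈ s | f i ≤ g i} * C := by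
  calc #{i ∈ s | ¬ f i ≤ g i} * c
      ≤ ∑ i ∈ s with ¬ f i ≤ g i, (f i - g i) := by
        rw [← nsmul_eq_mul]
        refine card_nsmul_le_sum _ _ _ fun i hi => ?_
        rw [mem_filter, not_le] at hi
        exact hgap i hi.1 hi.2
    _ = ∑ i ∈ s with f i ≤ g i, (g i - f i) := sum_filter_not_le_sub_eq_sum_filter_le_sub s f g hsum
    _ ≤ #{i ∈ s | f i ≤ g i} * C := by
        rw [← nsmul_eq_mul]
        refine sum_le_card_nsmul _ _ _ fun i hi => ?_
        rw [mem_filter] at hi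
        exact hcap i hi.1 hi.2

end Balance

theorem repacking_good_indices_general (wbar : ℕ) (f g : Fin wbar → ℝ) (hbar γ ε α : ℝ)
    (hf : ∀ i, 0 ≤ f i)
    (hsum : ∑ i, f i = ∑ i, g i)
    (hhbar : 0 < hbar) (hγ0 : 0 < γ)
    (hε0 : 0 < ε) (hεα : ε < α)
    (hgap : ∀ i, g i < f i → γ * hbar / (1 + ε) ≤ f i - g i)
    (hcap : ∀ i, g i ≤ (1 - 2 * α / (1 + ε)) * hbar) :
    γ * (wbar : ℝ) / (1 + ε - 2 * α + γ) ≤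
      ((univ.filter (fun i : Fin wbar => f i ≤ g i)).card : ℝ) ∧
    (γ ≤ ε →
      γ * (wbar : ℝ) ≤ ((univ.filter (fun i : Fin wbar => f i ≤ g i)).card : ℝ)) := by
  set G : ℝ := ((univ.filter (fun i : Fin wbar => f i ≤ g i)).card : ℝ)
  set B : ℝ := ((univ.filter (fun i : Fin wbar => ¬ f i ≤ g i)).card : ℝ)
  have hbalance : B * (γ * hbar / (1 + ε)) ≤ G * ((1 - 2 * α / (1 + ε)) * hbar) :=
    card_filter_not_le_mul_le_card_filter_le_mul univ hsum (fun i _ => hgap i)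
      fun i _ _ => by linarith [hf i, hcap i]
  have hbad : γ * B ≤ (1 + ε - 2 * α) * G := by
    refine le_of_mul_le_mul_right ?_ (show 0 < hbar / (1 + ε) by positivity)
    calc γ * B * (hbar / (1 + ε)) = B * (γ * hbar / (1 + ε)) := by ring
      _ ≤ G * ((1 - 2 * α / (1 + ε)) * hbar) := hbalance
      _ = (1 + ε - 2 * α) * G * (hbar / (1 + ε)) := by
        rw [one_sub_div (by positivity)]
        ring
  have hgood : γ * wbar ≤ (1 + ε - 2 * α + γ) * G := by
    have hcard : G + B = wbar := by
      unfold G B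
      exact_mod_cast (card_filter_add_card_filter_not (s := univ) _).trans (card_fin wbar)
    linear_combination hbad - γ * hcard
  refine ⟨div_le_of_le_mul_of_nonneg (by positivity) (by positivity) (by linarith), fun hγε => ?_⟩
  calc γ * wbar ≤ (1 + ε - 2 * α + γ) * G := hgood
    _ ≤ G := mul_le_of_le_one_left (by positivity) (by linarith)

/-- **Arithmetic core of the Repacking Lemma.**  Let `f g : Fin w̄ → ℝ≥0` with equal sums
(`f i` = height of the `i`-th free rectangle, `g i` = height of the `i`-th newly free
rectangle).  Suppose that whenever `g i < f i` the gap is at least `γ·h̄/(1+ε)`, and every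
`g i` is at most `(1 − 2α/(1+ε))·h̄`.  Then the set `G = {i : g i ≥ f i}` of good indices
satisfies `|G| ≥ γ·w̄/(1 + ε − 2α + γ)`; in particular, if `γ ≤ ε` (recall `ε < α`), then
`|G| ≥ γ·w̄`. -/
theorem repacking_good_indices (wbar : ℕ) (f g : Fin wbar → ℝ) (hbar γ ε α : ℝ)
    (hf : ∀ i, 0 ≤ f i) (hg : ∀ i, 0 ≤ g i)
    (hsum : ∑ i, f i = ∑ i, g i)
    (hhbar : 0 < hbar) (hγ0 : 0 < γ) (hγ1 : γ ≤ 1)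
    (hε0 : 0 < ε) (hε1 : ε < 1) (hεα : ε < α) (hα1 : α < 1)
    (hgap : ∀ i, g i < f i → γ * hbar / (1 + ε) ≤ f i - g i)
    (hcap : ∀ i, g i ≤ (1 - 2 * α / (1 + ε)) * hbar) :
    γ * (wbar : ℝ) / (1 + ε - 2 * α + γ) ≤
      ((univ.filter (fun i : Fin wbar => f i ≤ g i)).card : ℝ) ∧
    (γ ≤ ε →
      γ * (wbar : ℝ) ≤ ((univ.filter (fun i : Fin wbar => f i ≤ g i)).card : ℝ)) :=
  repacking_good_indices_general wbar f g hbar γ ε α hf hsum hhbar hγ0 hε0 hεα hgap hcap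
end

section
/- Let q and d be positive integers, and let B be a box of height h containing a feasible packing of vertical rectangles, each of width exactly 1, each of height at least h/d, and with at most q distinct heights among them. Then all these rectangles can be repacked inside B into at most d·(q+1)^d vertical containers (boxes in which rectangles of equal height are stacked side by side), such that the total area of the containers equals the total area of the rectangles. -/
open Finset
open scoped Classical

/-!
Cut the box into the unit columns `[k, k + 1) × [0, H]`, putting each rectangle into the column
of the integer part of its left side. Two rectangles of one column overlap horizontally, so they
are stacked; since each has height at least `H / d`, a column holds at most `d` of them. Number
the rectangles of each column by levels `0, …, d - 1` and call the vector of their heights (`0` at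
an empty level) the type of the column: there are at most `(q + 1) ^ d` types. Now place the
columns of equal type side by side, the groups in any order. In the group of type `τ`, the
rectangles at an occupied level `j` form a container of height `τ j` whose width is the number of
columns of type `τ`, lying above the containers of the levels below `j`. This gives at most
`d (q + 1) ^ d` containers, and they are exactly filled.
-/

open MeasureTheory in
lemma sum_le_of_pairwise_disjoint_intervals {ι : Type*} {s : Finset ι} {y h : ι → ℝ} {H : ℝ}
    (hH : 0 ≤ H) (hh : ∀ i ∈ s, 0 ≤ h i) (hmem : ∀ i ∈ s, 0 ≤ y i ∧ y i + h i ≤ H)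
    (hdisj : ∀ i ∈ s, ∀ j ∈ s, i ≠ j → y i + h i ≤ y j ∨ y j + h j ≤ y i) :
    ∑ i ∈ s, h i ≤ H := by
  have hpd : (s : Set ι).PairwiseDisjoint fun i => Set.Ioc (y i) (y i + h i) := by
    intro i hi j hj hij
    rcases hdisj i hi j hj hij with hle | hle
    · exact Set.Ioc_disjoint_Ioc_of_le hle
    · exact (Set.Ioc_disjoint_Ioc_of_le hle).symm
  have hsub : ⋃ i ∈ s, Set.Ioc (y i) (y i + h i) ⊆ Set.Ioc 0 H := by
    simp only [Set.iUnion_subset_iff]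
    exact fun i hi => Set.Ioc_subset_Ioc (hmem i hi).1 (hmem i hi).2
  have hvol := measure_mono (μ := volume) hsub
  rw [measure_biUnion_finset hpd fun _ _ => measurableSet_Ioc, Real.volume_Ioc, sub_zero] at hvol
  simp only [Real.volume_Ioc, add_sub_cancel_left] at hvol
  rw [← ENNReal.ofReal_sum_of_nonneg hh] at hvol
  exact (ENNReal.ofReal_le_ofReal_iff hH).1 hvol

namespace IsPacking

variable {ι : Type*} {s : Finset ι} {ht : ι → ℝ} {W H : ℝ} {x y : ι → ℝ}

lemma floor_lt_floor (hp : IsPacking s (fun _ => 1) ht W H x y) {i : ι} (hi : i ∈ s) :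
    ⌊x i⌋₊ < ⌊W⌋₊ := by
  obtain ⟨hx, hxW, -⟩ := hp.1 i hi
  rw [Nat.lt_iff_add_one_le, ← Nat.floor_add_one hx]
  exact Nat.floor_le_floor hxW

lemma card_columns_le (hp : IsPacking s (fun _ => 1) ht W H x y) (hW : 0 ≤ W) :
    (#(s.image fun i => ⌊x i⌋₊) : ℝ) ≤ W :=
  calc (#(s.image fun i => ⌊x i⌋₊) : ℝ) ≤ #(range ⌊W⌋₊) := by
        gcongr
        intro k hk
        obtain ⟨i, hi, rfl⟩ := mem_image.1 hk
        exact mem_range.2 (hp.floor_lt_floor hi)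
    _ ≤ W := by simpa using Nat.floor_le hW

/-- Unit-width rectangles whose left sides have the same integer part overlap horizontally. -/
lemma vertical_disjoint_of_floor_eq (hp : IsPacking s (fun _ => 1) ht W H x y) {i j : ι}
    (hi : i ∈ s) (hj : j ∈ s) (hij : i ≠ j) (hfloor : ⌊x i⌋₊ = ⌊x j⌋₊) :
    y i + ht i ≤ y j ∨ y j + ht j ≤ y i := by
  have hxi := Nat.floor_le (hp.1 i hi).1
  have hxj := Nat.floor_le (hp.1 j hj).1
  have hxi' := Nat.lt_floor_add_one (x i)
  have hxj' := Nat.lt_floor_add_one (x j)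
  rw [hfloor] at hxi hxi'
  rcases hp.2 i hi j hj hij with h | h | h | h
  · linarith
  · linarith
  · exact Or.inl h
  · exact Or.inr h

lemma sum_column_le (hp : IsPacking s (fun _ => 1) ht W H x y) (hH : 0 ≤ H)
    (hht : ∀ i ∈ s, 0 ≤ ht i) (k : ℕ) : ∑ i ∈ s with ⌊x i⌋₊ = k, ht i ≤ H := by
  refine sum_le_of_pairwise_disjoint_intervals (y := y) hH
    (fun i hi => hht i (mem_filter.1 hi).1) (fun i hi => ?_) fun i hi j hj hij => ?_
  · obtain ⟨-, -, hy⟩ := hp.1 i (mem_filter.1 hi).1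
    exact hy
  · rw [mem_filter] at hi hj
    exact hp.vertical_disjoint_of_floor_eq hi.1 hj.1 hij (hi.2.trans hj.2.symm)

end IsPacking

lemma card_le_of_div_le_of_sum_le {ι : Type*} {t : Finset ι} {f : ι → ℝ} {H : ℝ} {d : ℕ}
    (hH : 0 < H) (hd : 0 < d) (hf : ∀ i ∈ t, H / d ≤ f i) (hsum : ∑ i ∈ t, f i ≤ H) :
    #t ≤ d := by
  have hd' : (0 : ℝ) < d := Nat.cast_pos.2 hd
  have hle : #t * (H / d) ≤ H := by
    simpa [nsmul_eq_mul] using (card_nsmul_le_sum t f _ hf).trans hsum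
  rw [mul_div_assoc', div_le_iff₀ hd'] at hle
  exact_mod_cast le_of_mul_le_mul_right (hle.trans_eq (mul_comm _ _)) hH

lemma exists_injOn_fin_of_card_fiber_le {ι γ : Type*} [DecidableEq γ] (s : Finset ι)
    (κ : ι → γ) {d : ℕ} (hd : 0 < d) (hκ : ∀ k, #{i ∈ s | κ i = k} ≤ d) :
    ∃ lvl : ι → Fin d, Set.InjOn (fun i => (κ i, lvl i)) s := by
  set col : γ → List ι := fun k => {i ∈ s | κ i = k}.toList
  have hidx : ∀ i ∈ s, (col (κ i)).idxOf i < d := fun i hi =>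
    calc (col (κ i)).idxOf i < (col (κ i)).length :=
          List.idxOf_lt_length_iff.2 (by simp [col, hi])
      _ ≤ d := by simpa [col] using hκ (κ i)
  refine ⟨fun i => ⟨(col (κ i)).idxOf i % d, Nat.mod_lt _ hd⟩, fun i hi j hj hij => ?_⟩
  simp only [Prod.mk.injEq, Fin.mk.injEq, Nat.mod_eq_of_lt (hidx i hi),
    Nat.mod_eq_of_lt (hidx j hj)] at hij
  obtain ⟨hκij, hidxij⟩ := hij
  rw [hκij] at hidxij
  exact (List.idxOf_inj (by simp [col, mem_coe.1 hi, hκij])).1 hidxij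

section Offset

variable {β : Type*} (r : β → β → Prop) (S : Finset β) (f : β → ℝ)

/-- Where `a` starts when the items of `S` are laid end to end in the order `r`, item `b` having
length `f b`. -/
noncomputable def offset (a : β) : ℝ := ∑ b ∈ S with r b a, f b

variable {r S f}

lemma offset_nonneg (hf : ∀ b ∈ S, 0 ≤ f b) (a : β) : 0 ≤ offset r S f a :=
  sum_nonneg fun b hb => hf b (mem_filter.1 hb).1

variable [IsStrictTotalOrder β r]

lemma offset_add_le_offset (hf : ∀ b ∈ S, 0 ≤ f b) {a a' : β} (ha : a ∈ S) (haa' : r a a') :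
    offset r S f a + f a ≤ offset r S f a' := by
  have hnotin : a ∉ {b ∈ S | r b a} := fun h => irrefl_of r a (mem_filter.1 h).2
  rw [offset, add_comm, ← sum_insert hnotin]
  refine sum_le_sum_of_subset_of_nonneg (fun b hb => ?_) fun b hb _ => hf b (mem_filter.1 hb).1
  rcases mem_insert.1 hb with rfl | hb
  · exact mem_filter.2 ⟨ha, haa'⟩
  · exact mem_filter.2 ⟨(mem_filter.1 hb).1, trans_of r (mem_filter.1 hb).2 haa'⟩

lemma offset_add_le_sum (hf : ∀ b ∈ S, 0 ≤ f b) {a : β} (ha : a ∈ S) :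
    offset r S f a + f a ≤ ∑ b ∈ S, f b := by
  have hnotin : a ∉ {b ∈ S | r b a} := fun h => irrefl_of r a (mem_filter.1 h).2
  rw [offset, add_comm, ← sum_insert hnotin]
  exact sum_le_sum_of_subset_of_nonneg (insert_subset ha (filter_subset _ _))
    fun b hb _ => hf b hb

lemma offset_separated (hf : ∀ b ∈ S, 0 ≤ f b) {a a' : β} (ha : a ∈ S) (ha' : a' ∈ S)
    (hne : a ≠ a') :
    offset r S f a + f a ≤ offset r S f a' ∨ offset r S f a' + f a' ≤ offset r S f a := by
  rcases trichotomous_of r a a' with h | h | h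
  · exact Or.inl (offset_add_le_offset hf ha h)
  · exact absurd h hne
  · exact Or.inr (offset_add_le_offset hf ha' h)

end Offset

def IsContainerRepacking {ι α : Type*} [DecidableEq α] (s : Finset ι) (ht : ι → ℝ) (W H : ℝ)
    (C : Finset α) (cw chh cx cy : α → ℝ) (σ : ι → α) : Prop :=
  IsPacking C cw chh W H cx cy ∧ (∀ i ∈ s, σ i ∈ C ∧ ht i = chh (σ i)) ∧
    ∀ c ∈ C, (#{i ∈ s | σ i = c} : ℝ) = cw c

namespace IsContainerRepacking

variable {ι α : Type*} [DecidableEq α] {s : Finset ι} {ht : ι → ℝ} {W H : ℝ} {C : Finset α}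
  {cw chh cx cy : α → ℝ} {σ : ι → α}

lemma sum_mul_eq (h : IsContainerRepacking s ht W H C cw chh cx cy σ) :
    ∑ c ∈ C, cw c * chh c = ∑ i ∈ s, ht i := by
  calc ∑ c ∈ C, cw c * chh c = ∑ c ∈ C, ∑ i ∈ s with σ i = c, ht i := by
        refine sum_congr rfl fun c hc => ?_
        rw [← h.2.2 c hc, ← nsmul_eq_mul, ← sum_const]
        refine sum_congr rfl fun i hi => ?_
        obtain ⟨his, rfl⟩ := mem_filter.1 hi
        exact (h.2.1 i his).2.symm
    _ = ∑ i ∈ s, ht i := sum_fiberwise_of_maps_to (fun i hi => (h.2.1 i hi).1) ht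

lemma exists_fin (h : IsContainerRepacking s ht W H C cw chh cx cy σ) (hC : C.Nonempty) :
    ∃ (cw' chh' cx' cy' : Fin #C → ℝ) (σ' : ι → Fin #C),
      (∀ c, 0 ≤ cx' c ∧ cx' c + cw' c ≤ W ∧ 0 ≤ cy' c ∧ cy' c + chh' c ≤ H) ∧
      (∀ c c' : Fin #C, c ≠ c' →
        cx' c + cw' c ≤ cx' c' ∨ cx' c' + cw' c' ≤ cx' c ∨
        cy' c + chh' c ≤ cy' c' ∨ cy' c' + chh' c' ≤ cy' c) ∧
      (∀ i ∈ s, ht i = chh' (σ' i)) ∧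
      (∀ c, ((s.filter (fun i => σ' i = c)).card : ℝ) = cw' c) ∧
      (∑ c, cw' c * chh' c = ∑ i ∈ s, 1 * ht i) := by
  obtain ⟨hpack, hσ, hcard⟩ := h
  obtain ⟨c₀, hc₀⟩ := hC
  set e := C.equivFin
  set f : Fin #C → α := fun c => e.symm c
  have hf : Function.Injective f := Subtype.val_injective.comp e.symm.injective
  set σ' : ι → Fin #C := fun i => e (if hi : σ i ∈ C then ⟨σ i, hi⟩ else ⟨c₀, hc₀⟩)
  have hfσ' : ∀ i ∈ s, f (σ' i) = σ i := fun i hi => by simp [f, σ', (hσ i hi).1]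
  refine ⟨cw ∘ f, chh ∘ f, cx ∘ f, cy ∘ f, σ', fun c => hpack.1 _ (e.symm c).2,
    fun c c' hne => hpack.2 _ (e.symm c).2 _ (e.symm c').2 (hf.ne hne),
    fun i hi => (hσ i hi).2.trans (congrArg chh (hfσ' i hi).symm), fun c => ?_, ?_⟩
  · rw [Function.comp_apply, ← hcard _ (e.symm c).2]
    congr 2
    refine filter_congr fun i hi => ?_
    rw [← hf.eq_iff, hfσ' i hi]
  · simp only [Function.comp_apply, one_mul]
    rw [e.symm.sum_comp (fun c => cw c * chh c), sum_coe_sort C (fun c => cw c * chh c)]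
    exact (IsContainerRepacking.sum_mul_eq ⟨hpack, hσ, hcard⟩)

end IsContainerRepacking

section Columns

variable {ι γ : Type*} [DecidableEq γ] (s : Finset ι) (ht : ι → ℝ) (κ : ι → γ) {d : ℕ}
  (lvl : ι → Fin d)

/-- The type of column `k`: at level `j`, the height of the rectangle of column `k` at level `j`
(a sum over at most one rectangle), or `0` if there is none. -/
noncomputable def columnType (k : γ) (j : Fin d) : ℝ :=
  ∑ i ∈ s with κ i = k ∧ lvl i = j, ht i

noncomputable def columnTypes : Finset (Fin d → ℝ) := (s.image κ).image (columnType s ht κ lvl)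

noncomputable def typeCount (τ : Fin d → ℝ) : ℕ :=
  #{k ∈ s.image κ | columnType s ht κ lvl k = τ}

noncomputable def containerOf (i : ι) : (Fin d → ℝ) × Fin d :=
  (columnType s ht κ lvl (κ i), lvl i)

variable {s ht κ lvl}

lemma columnType_nonneg (hht : ∀ i ∈ s, 0 ≤ ht i) (k : γ) (j : Fin d) :
    0 ≤ columnType s ht κ lvl k j :=
  sum_nonneg fun i hi => hht i (mem_filter.1 hi).1

lemma columnType_apply (hinj : Set.InjOn (fun i => (κ i, lvl i)) s) {i : ι} (hi : i ∈ s) :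
    columnType s ht κ lvl (κ i) (lvl i) = ht i := by
  refine sum_eq_single_of_mem i (mem_filter.2 ⟨hi, rfl, rfl⟩) fun i' hi' hne => ?_
  obtain ⟨hi's, hκ, hlvl⟩ := mem_filter.1 hi'
  exact absurd (hinj hi's hi (Prod.ext hκ hlvl)) hne

lemma sum_columnType (k : γ) :
    ∑ j, columnType s ht κ lvl k j = ∑ i ∈ s with κ i = k, ht i := by
  simp only [columnType, ← filter_filter]
  exact sum_fiberwise _ _ _

lemma exists_of_columnType_ne_zero {k : γ} {j : Fin d} (h : columnType s ht κ lvl k j ≠ 0) :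
    ∃ i ∈ s, κ i = k ∧ lvl i = j := by
  obtain ⟨i, hi, -⟩ := exists_ne_zero_of_sum_ne_zero h
  exact ⟨i, (mem_filter.1 hi).1, (mem_filter.1 hi).2⟩

lemma columnType_mem (hinj : Set.InjOn (fun i => (κ i, lvl i)) s) (k : γ) (j : Fin d) :
    columnType s ht κ lvl k j ∈ insert 0 (s.image ht) := by
  by_cases h : columnType s ht κ lvl k j = 0
  · exact h ▸ mem_insert_self _ _
  obtain ⟨i, hi, rfl, rfl⟩ := exists_of_columnType_ne_zero h
  rw [columnType_apply hinj hi]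
  exact mem_insert_of_mem (mem_image_of_mem ht hi)

lemma card_columnTypes_le (hinj : Set.InjOn (fun i => (κ i, lvl i)) s) {q : ℕ}
    (hq : #(s.image ht) ≤ q) : #(columnTypes s ht κ lvl) ≤ (q + 1) ^ d := by
  have hsub : columnTypes s ht κ lvl ⊆ Fintype.piFinset fun _ => insert 0 (s.image ht) := by
    intro τ hτ
    obtain ⟨k, -, rfl⟩ := mem_image.1 hτ
    exact Fintype.mem_piFinset.2 (columnType_mem hinj k)
  calc #(columnTypes s ht κ lvl) ≤ #(insert 0 (s.image ht)) ^ d := by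
        simpa using card_le_card hsub
    _ ≤ (q + 1) ^ d := Nat.pow_le_pow_left ((card_insert_le _ _).trans (by omega)) d

lemma card_image_containerOf_le :
    #(s.image (containerOf s ht κ lvl)) ≤ #(columnTypes s ht κ lvl) * d := by
  calc _ ≤ #(columnTypes s ht κ lvl ×ˢ (univ : Finset (Fin d))) := by
        refine card_le_card fun c hc => ?_
        obtain ⟨i, hi, rfl⟩ := mem_image.1 hc
        exact mem_product.2 ⟨mem_image_of_mem _ (mem_image_of_mem κ hi), mem_univ _⟩
    _ = #(columnTypes s ht κ lvl) * d := by simp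

lemma sum_typeCount :
    ∑ τ ∈ columnTypes s ht κ lvl, typeCount s ht κ lvl τ = #(s.image κ) :=
  (card_eq_sum_card_image _ _).symm

end Columns

section Containers

variable {ι γ : Type*} [DecidableEq γ] {s : Finset ι} {ht : ι → ℝ} {κ : ι → γ} {d : ℕ}
  {lvl : ι → Fin d}

/-- Container `(τ, j)` gets exactly one rectangle from each column of type `τ`, because an
occupied level has positive height. -/
lemma card_filter_containerOf_eq (hinj : Set.InjOn (fun i => (κ i, lvl i)) s)
    (hpos : ∀ i ∈ s, 0 < ht i) {c : (Fin d → ℝ) × Fin d}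
    (hc : c ∈ s.image (containerOf s ht κ lvl)) :
    #{i ∈ s | containerOf s ht κ lvl i = c} = typeCount s ht κ lvl c.1 := by
  obtain ⟨i₀, hi₀, rfl⟩ := mem_image.1 hc
  refine card_bij (fun i _ => κ i) (fun i hi => ?_) (fun i₁ hi₁ i₂ hi₂ hκ => ?_) fun k hk => ?_
  · obtain ⟨his, hic⟩ := mem_filter.1 hi
    exact mem_filter.2 ⟨mem_image_of_mem κ his, congrArg Prod.fst hic⟩
  · obtain ⟨hi₁s, hi₁c⟩ := mem_filter.1 hi₁
    obtain ⟨hi₂s, hi₂c⟩ := mem_filter.1 hi₂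
    exact hinj hi₁s hi₂s (Prod.ext hκ (congrArg Prod.snd (hi₁c.trans hi₂c.symm) :))
  · obtain ⟨-, hktype⟩ := mem_filter.1 hk
    have hne : columnType s ht κ lvl k (lvl i₀) ≠ 0 := by
      rw [hktype]
      exact (columnType_apply hinj hi₀).trans_ne (hpos i₀ hi₀).ne'
    obtain ⟨i, hi, rfl, hlvl⟩ := exists_of_columnType_ne_zero hne
    exact ⟨i, mem_filter.2 ⟨hi, Prod.ext hktype hlvl⟩, rfl⟩

lemma isPacking_containers {W H : ℝ} (hht : ∀ i ∈ s, 0 ≤ ht i) (hW : (#(s.image κ) : ℝ) ≤ W)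
    (hH : ∀ k, ∑ i ∈ s with κ i = k, ht i ≤ H) :
    IsPacking (s.image (containerOf s ht κ lvl)) (fun c => typeCount s ht κ lvl c.1)
      (fun c => c.1 c.2) W H (fun c => offset WellOrderingRel (columnTypes s ht κ lvl) (typeCount s ht κ lvl ·) c.1)
      (fun c => offset (· < ·) univ c.1 c.2) := by
  have hcount : ∀ τ ∈ columnTypes s ht κ lvl, (0 : ℝ) ≤ typeCount s ht κ lvl τ :=
    fun _ _ => Nat.cast_nonneg _
  have hlevel : ∀ c ∈ s.image (containerOf s ht κ lvl), ∀ j ∈ (univ : Finset (Fin d)),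
      0 ≤ c.1 j := by
    intro c hc j _
    obtain ⟨i, -, rfl⟩ := mem_image.1 hc
    exact columnType_nonneg hht _ j
  have htype : ∀ c ∈ s.image (containerOf s ht κ lvl), c.1 ∈ columnTypes s ht κ lvl := by
    intro c hc
    obtain ⟨i, hi, rfl⟩ := mem_image.1 hc
    exact mem_image_of_mem _ (mem_image_of_mem κ hi)
  refine ⟨fun c hc => ⟨offset_nonneg hcount _, ?_, offset_nonneg (hlevel c hc) _, ?_⟩,
    fun c hc c' hc' hne => ?_⟩
  · calc _ ≤ ∑ τ ∈ columnTypes s ht κ lvl, (typeCount s ht κ lvl τ : ℝ) :=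
          offset_add_le_sum hcount (htype c hc)
      _ = #(s.image κ) := mod_cast sum_typeCount
      _ ≤ W := hW
  · obtain ⟨i, -, rfl⟩ := mem_image.1 hc
    calc _ ≤ ∑ j, columnType s ht κ lvl (κ i) j := offset_add_le_sum (hlevel _ hc) (mem_univ _)
      _ ≤ H := (sum_columnType _).trans_le (hH _)
  by_cases htypes : c.1 = c'.1
  · have hlevels : c.2 ≠ c'.2 := fun h => hne (Prod.ext htypes h)
    beta_reduce
    rw [← htypes]
    rcases offset_separated (r := (· < ·)) (hlevel c hc) (mem_univ _) (mem_univ _) hlevels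
      with h | h
    · exact Or.inr (Or.inr (Or.inl h))
    · exact Or.inr (Or.inr (Or.inr h))
  · rcases offset_separated (r := WellOrderingRel) hcount (htype c hc) (htype c' hc') htypes
      with h | h
    · exact Or.inl h
    · exact Or.inr (Or.inl h)

lemma isContainerRepacking_containerOf {W H : ℝ} (hinj : Set.InjOn (fun i => (κ i, lvl i)) s)
    (hpos : ∀ i ∈ s, 0 < ht i) (hW : (#(s.image κ) : ℝ) ≤ W)
    (hH : ∀ k, ∑ i ∈ s with κ i = k, ht i ≤ H) :
    IsContainerRepacking s ht W H (s.image (containerOf s ht κ lvl))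
      (fun c => typeCount s ht κ lvl c.1) (fun c => c.1 c.2)
      (fun c => offset WellOrderingRel (columnTypes s ht κ lvl) (typeCount s ht κ lvl ·) c.1)
      (fun c => offset (· < ·) univ c.1 c.2) (containerOf s ht κ lvl) :=
  ⟨isPacking_containers (fun i hi => (hpos i hi).le) hW hH,
    fun _ hi => ⟨mem_image_of_mem _ hi, (columnType_apply hinj hi).symm⟩,
    fun _ hc => congrArg Nat.cast (card_filter_containerOf_eq hinj hpos hc)⟩

end Containers

/-- **Repacking into vertical containers.**  Suppose the box `B` of width `W` and height `H`
contains a feasible packing of the rectangles of `s`, each of width `1`, height at least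
`H/d`, and with at most `q` distinct heights.  Then all the rectangles can be repacked inside
`B` into at most `d·(q+1)^d` vertical containers: containers are non-overlapping boxes
inside `B`, each rectangle is assigned (by `σ`) to a container of exactly its height, each
container is fully occupied side-by-side by its rectangles (its width equals the number of
unit-width rectangles assigned to it), and the total area of the containers equals the total
area of the rectangles. -/
theorem repack_vertical_containers {ι : Type*} (s : Finset ι) (ht : ι → ℝ)
    (W H : ℝ) (q d : ℕ) (hd : 0 < d) (hW : 0 < W) (hH : 0 < H)
    (hpack : ∃ x y, IsPacking s (fun _ => (1 : ℝ)) ht W H x y)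
    (hmin : ∀ i ∈ s, H / (d : ℝ) ≤ ht i)
    (hq : (s.image ht).card ≤ q) :
    ∃ t : ℕ, t ≤ d * (q + 1) ^ d ∧
      ∃ (cw chh cx cy : Fin t → ℝ) (σ : ι → Fin t),
        (∀ c, 0 ≤ cx c ∧ cx c + cw c ≤ W ∧ 0 ≤ cy c ∧ cy c + chh c ≤ H) ∧
        (∀ c c' : Fin t, c ≠ c' →
          cx c + cw c ≤ cx c' ∨ cx c' + cw c' ≤ cx c ∨
          cy c + chh c ≤ cy c' ∨ cy c' + chh c' ≤ cy c) ∧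
        (∀ i ∈ s, ht i = chh (σ i)) ∧
        (∀ c, ((s.filter (fun i => σ i = c)).card : ℝ) = cw c) ∧
        (∑ c, cw c * chh c = ∑ i ∈ s, 1 * ht i) := by
  obtain rfl | hs := s.eq_empty_or_nonempty
  · refine ⟨1, Nat.one_le_iff_ne_zero.2 (by positivity), fun _ => 0, fun _ => 0, fun _ => 0,
      fun _ => 0, fun _ => 0, ?_⟩
    simp [hW.le, hH.le]
  obtain ⟨x, y, hp⟩ := hpack
  have hpos : ∀ i ∈ s, 0 < ht i := fun i hi =>
    (div_pos hH (Nat.cast_pos.2 hd)).trans_le (hmin i hi)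
  have hcolumn := hp.sum_column_le hH.le fun i hi => (hpos i hi).le
  obtain ⟨lvl, hinj⟩ := exists_injOn_fin_of_card_fiber_le s (fun i => ⌊x i⌋₊) hd fun k =>
    card_le_of_div_le_of_sum_le hH hd (fun i hi => hmin i (mem_filter.1 hi).1) (hcolumn k)
  obtain ⟨cw, chh, cx, cy, σ, hσ⟩ :=
    (isContainerRepacking_containerOf hinj hpos (hp.card_columns_le hW.le) hcolumn).exists_fin
      (hs.image _)
  refine ⟨_, ?_, cw, chh, cx, cy, σ, hσ⟩
  calc _ ≤ #(columnTypes s ht _ lvl) * d := card_image_containerOf_le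
    _ ≤ (q + 1) ^ d * d := Nat.mul_le_mul_right _ (card_columnTypes_le hinj hq)
    _ = d * (q + 1) ^ d := mul_comm _ _
end

section
/- Let M be a finite set of rectangles, each having width ≥ ε_large·N and height ≤ ε_small·N with ε_small ≤ ε_s, and suppose M can be packed in an N×N bin with total area a(M) ≤ (1/2 + ε_a)·N² for constants 0 < ε_a < 1/2 and ε_s > 0. Then a subset S ⊆ M with |S| ≥ (1 − 2ε_s − 2ε_a)·|M| can be packed into an N × (1−ε_s)·N bin. -/
/-!
Remove a horizontal band of height `ε = εs·N`, taken cyclically modulo `N`, and push the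
rectangles above it down by `ε` (when the band wraps around, keep the window of height
`N - ε` between its two ends). A rectangle of height `h ≤ ε` meets the band for a set of band
positions of measure `h + ε ≤ 2ε`, so averaging over `Q` equally spaced positions gives one
that destroys at most `(2εs + 1/Q)·|M|` rectangles; `Q ≥ 1/εa` absorbs the discretisation.
-/

open Finset

theorem Int.card_Ioo_floor_ceil_le {u v : ℝ} (huv : u ≤ v) :
    (#(Ioo ⌊u⌋ ⌈v⌉) : ℝ) ≤ v - u + 1 := by
  have hcast : (#(Ioo ⌊u⌋ ⌈v⌉) : ℝ) = max ((⌈v⌉ - ⌊u⌋ - 1 : ℤ) : ℝ) 0 := by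
    rw [Int.card_Ioo, ← Int.cast_natCast, Int.toNat_eq_max, Int.cast_max, Int.cast_zero]
  rw [hcast, max_le_iff]
  push_cast
  exact ⟨by linarith [Int.ceil_lt_add_one v, Int.sub_one_lt_floor u], by linarith⟩

/-- Reading the second alternative as the integer `j - Q` maps these `j` injectively to the
integers in `(a/δ, b/δ)`. -/
theorem card_filter_range_mem_Ioo_or_sub_mem_Ioo_le (Q : ℕ) {δ a b : ℝ} (hδ : 0 < δ)
    (hab : a ≤ b) :
    (#{j ∈ range Q | ((j : ℕ) : ℝ) * δ ∈ Set.Ioo a b ∨ ((j : ℝ) - Q) * δ ∈ Set.Ioo a b} : ℝ)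
      ≤ (b - a) / δ + 1 := by
  set B := {j ∈ range Q | ((j : ℕ) : ℝ) * δ ∈ Set.Ioo a b ∨ ((j : ℝ) - Q) * δ ∈ Set.Ioo a b}
  set f : ℕ → ℤ := fun j => if (j : ℝ) * δ ∈ Set.Ioo a b then j else (j : ℤ) - Q
  have hmaps : Set.MapsTo f B (Ioo ⌊a / δ⌋ ⌈b / δ⌉) := by
    intro j hj
    have hj := (mem_filter.1 hj).2
    have hfj : (f j : ℝ) * δ ∈ Set.Ioo a b := by
      simp only [f]
      split_ifs with hin
      · exact_mod_cast hin
      · push_cast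
        exact hj.resolve_left hin
    rw [coe_Ioo, Set.mem_Ioo, Int.floor_lt, Int.lt_ceil, div_lt_iff₀ hδ, lt_div_iff₀ hδ]
    exact hfj
  have hinj : Set.InjOn f B := by
    intro j hj k hk hjk
    have hjQ := mem_range.1 (mem_filter.1 hj).1
    have hkQ := mem_range.1 (mem_filter.1 hk).1
    simp only [f] at hjk
    split_ifs at hjk <;> omega
  calc (#B : ℝ) ≤ #(Ioo ⌊a / δ⌋ ⌈b / δ⌉) := by exact_mod_cast card_le_card_of_injOn f hmaps hinj
    _ ≤ b / δ - a / δ + 1 := Int.card_Ioo_floor_ceil_le (by gcongr)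
    _ = (b - a) / δ + 1 := by ring

theorem exists_mem_card_filter_mul_le {α β : Type*} (s : Finset α) {T : Finset β}
    (hT : T.Nonempty) (r : α → β → Prop) [∀ a b, Decidable (r a b)] {B : ℝ}
    (hB : ∀ a ∈ s, (#{b ∈ T | r a b} : ℝ) ≤ B) :
    ∃ b ∈ T, (#{a ∈ s | r a b} : ℝ) * #T ≤ B * #s := by
  refine exists_le_of_sum_le hT ?_
  have hdouble : ∑ b ∈ T, (#{a ∈ s | r a b} : ℝ) = ∑ a ∈ s, (#{b ∈ T | r a b} : ℝ) := by
    exact_mod_cast (sum_card_bipartiteAbove_eq_sum_card_bipartiteBelow (s := s) (t := T) r).symm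
  calc ∑ b ∈ T, (#{a ∈ s | r a b} : ℝ) * #T
      = (∑ a ∈ s, (#{b ∈ T | r a b} : ℝ)) * #T := by rw [← sum_mul, hdouble]
    _ ≤ (∑ _a ∈ s, B) * #T := by gcongr with a ha; exact hB a ha
    _ = ∑ _b ∈ T, B * #s := by simp only [sum_const, nsmul_eq_mul]; ring

/-- Rectangle `i` misses the band `(c, c + ε)` taken modulo `H`; when the band wraps around,
this means lying in the window `[c + ε - H, c]`. -/
def AvoidsCyclicBand {ι : Type*} (H ε c : ℝ) (y h : ι → ℝ) (i : ι) : Prop :=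
  if c + ε ≤ H then y i + h i ≤ c ∨ c + ε ≤ y i else c + ε - H ≤ y i ∧ y i + h i ≤ c

theorem mem_Ioo_or_sub_mem_Ioo_of_not_avoidsCyclicBand {ι : Type*} {H ε c : ℝ} {y h : ι → ℝ}
    {i : ι} (hy : 0 ≤ y i) (hh : 0 ≤ h i) (hyH : y i + h i ≤ H) (hcH : c < H)
    (hmeet : ¬ AvoidsCyclicBand H ε c y h i) :
    c ∈ Set.Ioo (y i - ε) (y i + h i) ∨ c - H ∈ Set.Ioo (y i - ε) (y i + h i) := by
  unfold AvoidsCyclicBand at hmeet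
  split_ifs at hmeet with hband
  · rw [not_or, not_le, not_le] at hmeet
    exact Or.inl ⟨by linarith, hmeet.1⟩
  · rw [not_and_or, not_le, not_le] at hmeet
    rcases hmeet with hbelow | habove
    · exact Or.inr ⟨by linarith, by linarith⟩
    · exact Or.inl ⟨by linarith, habove⟩

namespace IsPacking

variable {ι : Type*} {s t : Finset ι} {w h : ι → ℝ} {W H : ℝ} {x y : ι → ℝ}

theorem mono (hp : IsPacking s w h W H x y) (hts : t ⊆ s) : IsPacking t w h W H x y :=
  ⟨fun i hi => hp.1 i (hts hi), fun i hi j hj hij => hp.2 i (hts hi) j (hts hj) hij⟩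

theorem of_vertical_order (hp : IsPacking s w h W H x y) {H' : ℝ} {y' : ι → ℝ}
    (hy' : ∀ i ∈ s, 0 ≤ y' i ∧ y' i + h i ≤ H')
    (horder : ∀ i ∈ s, ∀ j ∈ s, y i + h i ≤ y j → y' i + h i ≤ y' j) :
    IsPacking s w h W H' x y' := by
  refine ⟨fun i hi => ?_, fun i hi j hj hij => ?_⟩
  · obtain ⟨hx0, hxW, -⟩ := hp.1 i hi
    exact ⟨hx0, hxW, hy' i hi⟩
  · rcases hp.2 i hi j hj hij with hij' | hji | hij' | hji
    · exact Or.inl hij'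
    · exact Or.inr (Or.inl hji)
    · exact Or.inr (Or.inr (Or.inl (horder i hi j hj hij')))
    · exact Or.inr (Or.inr (Or.inr (horder j hj i hi hji)))

theorem shift_of_forall_mem_window (hp : IsPacking s w h W H x y) {a H' : ℝ}
    (hwin : ∀ i ∈ s, a ≤ y i ∧ y i + h i ≤ a + H') :
    IsPacking s w h W H' x (fun i => y i - a) :=
  hp.of_vertical_order
    (fun i hi => ⟨by linarith [hwin i hi], by linarith [hwin i hi]⟩)
    (fun _ _ _ _ hij => by linarith)

theorem collapse_band (hp : IsPacking s w h W H x y) {c ε : ℝ} (hc : 0 ≤ c)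
    (hcH : c + ε ≤ H) (hε : 0 ≤ ε) (havoid : ∀ i ∈ s, y i + h i ≤ c ∨ c + ε ≤ y i) :
    IsPacking s w h W (H - ε) x (fun i => if y i + h i ≤ c then y i else y i - ε) := by
  refine hp.of_vertical_order (fun i hi => ?_) (fun i hi j hj hij => ?_)
  · have hy0 := (hp.1 i hi).2.2.1
    split_ifs with hlow
    · exact ⟨hy0, by linarith⟩
    · have := (havoid i hi).resolve_left hlow
      exact ⟨by linarith, by linarith [(hp.1 i hi).2.2.2]⟩
  · split_ifs with hlow_i hlow_j hlow_j
    · exact hij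
    · linarith [(havoid j hj).resolve_left hlow_j]
    · linarith
    · linarith

theorem exists_of_forall_avoidsCyclicBand (hp : IsPacking s w h W H x y) {c ε : ℝ}
    (hc : 0 ≤ c) (hε : 0 ≤ ε) (havoid : ∀ i ∈ s, AvoidsCyclicBand H ε c y h i) :
    ∃ y', IsPacking s w h W (H - ε) x y' := by
  by_cases hcH : c + ε ≤ H
  · simp only [AvoidsCyclicBand, if_pos hcH] at havoid
    exact ⟨_, hp.collapse_band hc hcH hε havoid⟩
  · simp only [AvoidsCyclicBand, if_neg hcH] at havoid
    exact ⟨_, hp.shift_of_forall_mem_window fun i hi =>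
      ⟨(havoid i hi).1, by linarith [(havoid i hi).2]⟩⟩

open scoped Classical in
theorem card_filter_range_not_avoidsCyclicBand_le (hp : IsPacking s w h W H x y) {i : ι}
    (hi : i ∈ s) {ε : ℝ} (hh : 0 ≤ h i ∧ h i ≤ ε) (hH : 0 < H) {Q : ℕ} (hQ : 0 < Q) :
    (#{j ∈ range Q | ¬ AvoidsCyclicBand H ε ((j : ℕ) * (H / Q)) y h i} : ℝ)
      ≤ 2 * ε / H * Q + 1 := by
  have hQ' : (0 : ℝ) < Q := Nat.cast_pos.2 hQ
  obtain ⟨-, -, hy0, hyH⟩ := hp.1 i hi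
  calc (#{j ∈ range Q | ¬ AvoidsCyclicBand H ε ((j : ℕ) * (H / Q)) y h i} : ℝ)
      ≤ #{j ∈ range Q | ((j : ℕ) : ℝ) * (H / Q) ∈ Set.Ioo (y i - ε) (y i + h i) ∨
          ((j : ℝ) - Q) * (H / Q) ∈ Set.Ioo (y i - ε) (y i + h i)} := by
        refine Nat.cast_le.2 (card_le_card (monotone_filter_right _ fun j hj hmeet => ?_))
        have hjQ : (j : ℝ) * (H / Q) < H := by
          rw [mul_div_assoc', div_lt_iff₀ hQ', mul_comm]
          gcongr
          exact_mod_cast mem_range.1 hj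
        rw [sub_mul, show (Q : ℝ) * (H / Q) = H by field_simp]
        exact mem_Ioo_or_sub_mem_Ioo_of_not_avoidsCyclicBand hy0 hh.1 hyH hjQ hmeet
    _ ≤ (y i + h i - (y i - ε)) / (H / Q) + 1 :=
        card_filter_range_mem_Ioo_or_sub_mem_Ioo_le Q (by positivity) (by linarith)
    _ ≤ 2 * ε / H * Q + 1 := by
        rw [show y i + h i - (y i - ε) = h i + ε by ring, div_div_eq_mul_div, div_mul_eq_mul_div]
        gcongr
        linarith

theorem exists_subset_card_ge_of_height_le (hp : IsPacking s w h W H x y) {ε : ℝ}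
    (hH : 0 < H) (hε : 0 ≤ ε) (hh : ∀ i ∈ s, 0 ≤ h i ∧ h i ≤ ε) {Q : ℕ} (hQ : 0 < Q) :
    ∃ t ⊆ s, (1 - 2 * ε / H - 1 / Q) * #s ≤ #t ∧ ∃ y', IsPacking t w h W (H - ε) x y' := by
  classical
  have hQ' : (0 : ℝ) < Q := Nat.cast_pos.2 hQ
  set δ := H / Q
  obtain ⟨j, -, hj⟩ := exists_mem_card_filter_mul_le s (nonempty_range_iff.2 hQ.ne')
    (fun i j => ¬ AvoidsCyclicBand H ε (j * δ) y h i)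
    fun i hi => hp.card_filter_range_not_avoidsCyclicBand_le hi (hh i hi) hH hQ
  refine ⟨{i ∈ s | AvoidsCyclicBand H ε (j * δ) y h i}, filter_subset _ _, ?_,
    (hp.mono (filter_subset _ _)).exists_of_forall_avoidsCyclicBand (by positivity) hε
      fun i hi => (mem_filter.1 hi).2⟩
  have hsplit := card_filter_add_card_filter_not (s := s) (AvoidsCyclicBand H ε (j * δ) y h)
  rw [card_range] at hj
  have hremoved : (#{i ∈ s | ¬ AvoidsCyclicBand H ε (j * δ) y h i} : ℝ) ≤
      (2 * ε / H + 1 / Q) * #s := by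
    rw [← le_div_iff₀ hQ'] at hj
    calc _ ≤ (2 * ε / H * Q + 1) * #s / Q := hj
      _ = (2 * ε / H + 1 / Q) * #s := by field_simp
  have hpartition : (#s : ℝ) = #{i ∈ s | AvoidsCyclicBand H ε (j * δ) y h i} +
      #{i ∈ s | ¬ AvoidsCyclicBand H ε (j * δ) y h i} := by exact_mod_cast hsplit.symm
  linarith

end IsPacking

theorem steinberg_selection_general {ι : Type*} (M : Finset ι) (w h : ι → ℝ)
    (N εsmall εs εa : ℝ)
    (hN : 0 < N) (hεsm : 0 < εsmall) (hεsm_le : εsmall ≤ εs)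
    (hεa0 : 0 < εa)
    (hh : ∀ i ∈ M, 0 < h i ∧ h i ≤ εsmall * N)
    (hpack : ∃ x y, IsPacking M w h N N x y) :
    ∃ S ⊆ M, (1 - 2 * εs - 2 * εa) * (M.card : ℝ) ≤ (S.card : ℝ) ∧
      ∃ x y, IsPacking S w h N ((1 - εs) * N) x y := by
  obtain ⟨x, y, hp⟩ := hpack
  have hheight : ∀ i ∈ M, 0 ≤ h i ∧ h i ≤ εs * N := fun i hi =>
    ⟨(hh i hi).1.le, (hh i hi).2.trans (by gcongr)⟩
  have hQ : 0 < ⌈1 / εa⌉₊ := Nat.ceil_pos.2 (by positivity)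
  have hQεa : 1 / (⌈1 / εa⌉₊ : ℝ) ≤ εa := by
    rw [div_le_iff₀ (by positivity), ← div_le_iff₀' hεa0]
    exact Nat.le_ceil _
  obtain ⟨S, hSM, hcard, y', hS⟩ :=
    hp.exists_subset_card_ge_of_height_le hN (mul_pos (hεsm.trans_le hεsm_le) hN).le hheight hQ
  refine ⟨S, hSM, ?_, x, y', by rwa [sub_mul, one_mul]⟩
  calc (1 - 2 * εs - 2 * εa) * (#M : ℝ)
      ≤ (1 - 2 * (εs * N) / N - 1 / ⌈1 / εa⌉₊) * #M := by
        rw [mul_div_assoc, mul_div_cancel_right₀ _ hN.ne']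
        gcongr
        linarith
    _ ≤ #S := hcard

/-- **Selection via Steinberg's theorem (Lemma `lem:Stein`).**  Let `M` be a finite set of
rectangles, each of width at least `ε_large·N` and height at most `ε_small·N` with
`ε_small ≤ ε_s`, packable in an `N × N` bin and of total area at most `(1/2 + ε_a)·N²`
(`0 < ε_a < 1/2`).  Then a subset `S ⊆ M` of cardinality at least
`(1 − 2ε_s − 2ε_a)·|M|` can be packed into an `N × (1−ε_s)·N` bin. -/
theorem steinberg_selection {ι : Type*} [DecidableEq ι] (M : Finset ι) (w h : ι → ℝ)
    (N εlarge εsmall εs εa : ℝ)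
    (hN : 0 < N) (hεl : 0 < εlarge) (hεsm : 0 < εsmall) (hεsm_le : εsmall ≤ εs)
    (hεa0 : 0 < εa) (hεa1 : εa < 1 / 2)
    (hw : ∀ i ∈ M, εlarge * N ≤ w i)
    (hh : ∀ i ∈ M, 0 < h i ∧ h i ≤ εsmall * N)
    (hpack : ∃ x y, IsPacking M w h N N x y)
    (harea : ∑ i ∈ M, w i * h i ≤ (1 / 2 + εa) * N ^ 2) :
    ∃ S ⊆ M, (1 - 2 * εs - 2 * εa) * (M.card : ℝ) ≤ (S.card : ℝ) ∧
      ∃ x y, IsPacking S w h N ((1 - εs) * N) x y :=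
  steinberg_selection_general M w h N εsmall εs εa hN hεsm hεsm_le hεa0 hh hpack
end
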